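/- arXiv:0910.1790 — 5 statements merged into one kernel-verified Lean document; each statement's English description precedes it below -/
import Mathlib

section
/- (Gaussian elimination for complexes) Let 𝒞 be an additive category and consider a four-term segment of a chain complex A → B⊕C → D⊕E → F, where the first map is (α, β)ᵀ, the middle map is the block matrix ((φ, δ),(γ, ε)), and the last map is (μ, ν), with φ : B → D an isomorphism. Then this complex segment is homotopy equivalent to the segment A → C → E → F with maps β, ε − γφ⁻¹δ, and ν. -/
open CategoryTheory

/-- A four-term segment of a chain complex in a category. -/
structure FourTermSegment (𝒞 : Type*) [Category 𝒞] where
  X0 : 𝒞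
  X1 : 𝒞
  X2 : 𝒞
  X3 : 𝒞
  d0 : X0 ⟶ X1
  d1 : X1 ⟶ X2
  d2 : X2 ⟶ X3

/-- A chain map between four-term segments. -/
structure SegMap {𝒞 : Type*} [Category 𝒞] (S T : FourTermSegment 𝒞) where
  f0 : S.X0 ⟶ T.X0
  f1 : S.X1 ⟶ T.X1
  f2 : S.X2 ⟶ T.X2
  f3 : S.X3 ⟶ T.X3
  comm0 : S.d0 ≫ f1 = f0 ≫ T.d0
  comm1 : S.d1 ≫ f2 = f1 ≫ T.d1
  comm2 : S.d2 ≫ f3 = f2 ≫ T.d2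

/-- The identity chain map. -/
def SegMap.id {𝒞 : Type*} [Category 𝒞] (S : FourTermSegment 𝒞) : SegMap S S :=
  ⟨𝟙 _, 𝟙 _, 𝟙 _, 𝟙 _, by simp, by simp, by simp⟩

/-- Composition of chain maps. -/
def SegMap.comp {𝒞 : Type*} [Category 𝒞] {S T U : FourTermSegment 𝒞}
    (f : SegMap S T) (g : SegMap T U) : SegMap S U :=
  ⟨f.f0 ≫ g.f0, f.f1 ≫ g.f1, f.f2 ≫ g.f2, f.f3 ≫ g.f3,
    by simp only [← Category.assoc, f.comm0]; simp only [Category.assoc, g.comm0],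
    by simp only [← Category.assoc, f.comm1]; simp only [Category.assoc, g.comm1],
    by simp only [← Category.assoc, f.comm2]; simp only [Category.assoc, g.comm2]⟩

/-- A chain homotopy between two chain maps of four-term segments (the segments being
parts of larger complexes which vanish outside, the homotopy is one-sided at the ends). -/
structure SegHomotopy {𝒞 : Type*} [Category 𝒞] [Preadditive 𝒞] {S T : FourTermSegment 𝒞}
    (f g : SegMap S T) where
  h1 : S.X1 ⟶ T.X0
  h2 : S.X2 ⟶ T.X1
  h3 : S.X3 ⟶ T.X2
  e0 : f.f0 - g.f0 = S.d0 ≫ h1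
  e1 : f.f1 - g.f1 = S.d1 ≫ h2 + h1 ≫ T.d0
  e2 : f.f2 - g.f2 = S.d2 ≫ h3 + h2 ≫ T.d1
  e3 : f.f3 - g.f3 = h3 ≫ T.d2

/-- Homotopy equivalence of four-term segments. -/
def SegHomotopyEquiv {𝒞 : Type*} [Category 𝒞] [Preadditive 𝒞]
    (S T : FourTermSegment 𝒞) : Prop :=
  ∃ (f : SegMap S T) (g : SegMap T S),
    Nonempty (SegHomotopy (f.comp g) (SegMap.id S)) ∧
    Nonempty (SegHomotopy (g.comp f) (SegMap.id T))

/-- (Gaussian elimination for complexes.)  In an additive category `𝒞`, a four-term chain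
complex segment `A → B⊕C → D⊕E → F` with maps `(α, β)ᵀ`, the block matrix `((φ, δ), (γ, ε))`
and `(μ, ν)`, where `φ : B → D` is an isomorphism, is homotopy equivalent to the segment
`A → C → E → F` with maps `β`, `ε − γφ⁻¹δ` and `ν` (which is again a complex segment). -/
theorem stmt_2 (𝒞 : Type*) [Category 𝒞] [Preadditive 𝒞] [Limits.HasBinaryBiproducts 𝒞]
    (A B C D E F : 𝒞)
    (α : A ⟶ B) (β : A ⟶ C) (φ : B ⟶ D) (γ : B ⟶ E) (δ : C ⟶ D) (ε : C ⟶ E)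
    (μ : D ⟶ F) (ν : E ⟶ F) [IsIso φ]
    (S : FourTermSegment 𝒞)
    (hS : S = ⟨A, B ⊞ C, D ⊞ E, F,
      Limits.biprod.lift α β,
      Limits.biprod.desc (Limits.biprod.lift φ γ) (Limits.biprod.lift δ ε),
      Limits.biprod.desc μ ν⟩)
    (hc1 : S.d0 ≫ S.d1 = 0) (hc2 : S.d1 ≫ S.d2 = 0) :
    let S' : FourTermSegment 𝒞 :=
      ⟨A, C, E, F, β, ε - δ ≫ inv φ ≫ γ, ν⟩
    (S'.d0 ≫ S'.d1 = 0 ∧ S'.d1 ≫ S'.d2 = 0) ∧ SegHomotopyEquiv S S' := by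
  subst hS
  intro S'
  have hAD : α ≫ φ + β ≫ δ = 0 := by
    have := congrArg (· ≫ Limits.biprod.fst) hc1
    simpa using this
  have hAE : α ≫ γ + β ≫ ε = 0 := by
    have := congrArg (· ≫ Limits.biprod.snd) hc1
    simpa using this
  have hBF : φ ≫ μ + γ ≫ ν = 0 := by
    have := congrArg (Limits.biprod.inl ≫ ·) hc2
    simpa using this
  have hCF : δ ≫ μ + ε ≫ ν = 0 := by
    have := congrArg (Limits.biprod.inr ≫ ·) hc2
    simpa using this
  have hβδ : β ≫ δ = -(α ≫ φ) := by
    rw [eq_neg_iff_add_eq_zero, add_comm]; exact hAD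
  have hβε : β ≫ ε = -(α ≫ γ) := by
    rw [eq_neg_iff_add_eq_zero, add_comm]; exact hAE
  have hγν : γ ≫ ν = -(φ ≫ μ) := by
    rw [eq_neg_iff_add_eq_zero, add_comm]; exact hBF
  have hεν : ε ≫ ν = -(δ ≫ μ) := by
    rw [eq_neg_iff_add_eq_zero, add_comm]; exact hCF
  constructor
  · constructor
    · show β ≫ (ε - δ ≫ inv φ ≫ γ) = 0
      rw [Preadditive.comp_sub, hβε]
      rw [show β ≫ δ ≫ inv φ ≫ γ = (β ≫ δ) ≫ inv φ ≫ γ by simp, hβδ]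
      simp
    · show (ε - δ ≫ inv φ ≫ γ) ≫ ν = 0
      rw [Preadditive.sub_comp, hεν]
      rw [Category.assoc, Category.assoc, hγν]
      simp
  · -- the homotopy equivalence
    refine ⟨⟨𝟙 A, Limits.biprod.snd, Limits.biprod.desc (-(inv φ ≫ γ)) (𝟙 E), 𝟙 F,
        ?_, ?_, ?_⟩,
      ⟨𝟙 A, Limits.biprod.lift (-(δ ≫ inv φ)) (𝟙 C), Limits.biprod.lift 0 (𝟙 E), 𝟙 F,
        ?_, ?_, ?_⟩, ⟨⟨0, -(Limits.biprod.fst ≫ inv φ ≫ Limits.biprod.inl), 0,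
        ?_, ?_, ?_, ?_⟩⟩, ⟨⟨0, 0, 0, ?_, ?_, ?_, ?_⟩⟩⟩
    all_goals simp only [SegMap.comp, SegMap.id]
    all_goals try ext
    all_goals simp [reassoc_of% hβδ, reassoc_of% hβε, reassoc_of% hγν, reassoc_of% hεν,
      hβδ, hβε, hγν, hεν, Preadditive.sub_comp, Preadditive.comp_sub, S']
    all_goals abel
end

section
/- Let 𝒞 be an additive category and consider a four-term complex segment A → B⊕C → D⊕E → F with maps (α,β)ᵀ, ((φ,δ),(γ,ε)), (μ,ν), where φ : B → D is an isomorphism. Then a change of basis yields an isomorphic complex segment A → B⊕C → D⊕E → F with maps (0,β)ᵀ, the diagonal matrix ((φ,0),(0, ε − γφ⁻¹δ)), and (0,ν). -/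
open CategoryTheory

/-- (Change of basis for Gaussian elimination.)  In an additive category `𝒞`, a four-term
chain complex segment `A → B⊕C → D⊕E → F` with maps `(α, β)ᵀ`, the block matrix
`((φ, δ), (γ, ε))` and `(μ, ν)`, where `φ : B → D` is an isomorphism, is isomorphic (via a
change of basis which is the identity on `A` and `F`) to the segment `A → B⊕C → D⊕E → F`
with maps `(0, β)ᵀ`, the diagonal block matrix `((φ, 0), (0, ε − γφ⁻¹δ))`, and `(0, ν)`. -/
theorem stmt_3 (𝒞 : Type*) [CategoryTheory.Category 𝒞] [CategoryTheory.Preadditive 𝒞]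
    [CategoryTheory.Limits.HasBinaryBiproducts 𝒞]
    (A B C D E F : 𝒞)
    (α : A ⟶ B) (β : A ⟶ C) (φ : B ⟶ D) (γ : B ⟶ E) (δ : C ⟶ D) (ε : C ⟶ E)
    (μ : D ⟶ F) (ν : E ⟶ F) [CategoryTheory.IsIso φ]
    (S : FourTermSegment 𝒞)
    (hS : S = ⟨A, B ⊞ C, D ⊞ E, F,
      Limits.biprod.lift α β,
      Limits.biprod.desc (Limits.biprod.lift φ γ) (Limits.biprod.lift δ ε),
      Limits.biprod.desc μ ν⟩)
    (hc1 : S.d0 ≫ S.d1 = 0) (hc2 : S.d1 ≫ S.d2 = 0) :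
    let S2 : FourTermSegment 𝒞 :=
      ⟨A, B ⊞ C, D ⊞ E, F,
        Limits.biprod.lift 0 β,
        Limits.biprod.desc (Limits.biprod.lift φ 0)
          (Limits.biprod.lift 0 (ε - δ ≫ CategoryTheory.inv φ ≫ γ)),
        Limits.biprod.desc 0 ν⟩
    ∃ u : SegMap S S2,
      CategoryTheory.IsIso u.f0 ∧ CategoryTheory.IsIso u.f1 ∧
      CategoryTheory.IsIso u.f2 ∧ CategoryTheory.IsIso u.f3 := by
  subst hS
  intro S2
  have h11 : α ≫ φ + β ≫ δ = 0 := by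
    have := congrArg (· ≫ Limits.biprod.fst) hc1; simpa using this
  have h21 : φ ≫ μ + γ ≫ ν = 0 := by
    have := congrArg (Limits.biprod.inl ≫ ·) hc2; simpa using this
  have hα : α = -(β ≫ δ ≫ inv φ) := by
    have : α ≫ φ = -(β ≫ δ) := by rw [eq_neg_iff_add_eq_zero]; exact h11
    calc α = (α ≫ φ) ≫ inv φ := by simp
    _ = -(β ≫ δ ≫ inv φ) := by rw [this]; simp
  have hμ : μ = -(inv φ ≫ γ ≫ ν) := by
    have : φ ≫ μ = -(γ ≫ ν) := by rw [eq_neg_iff_add_eq_zero]; exact h21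
    calc μ = inv φ ≫ φ ≫ μ := by simp
    _ = -(inv φ ≫ γ ≫ ν) := by rw [this]; simp
  refine ⟨⟨𝟙 A,
    Limits.biprod.desc (Limits.biprod.lift (𝟙 B) 0)
      (Limits.biprod.lift (δ ≫ inv φ) (𝟙 C)),
    Limits.biprod.desc (Limits.biprod.lift (𝟙 D) (-(inv φ ≫ γ)))
      (Limits.biprod.lift 0 (𝟙 E)),
    𝟙 F, ?_, ?_, ?_⟩, ?_, ?_, ?_, ?_⟩
  · apply Limits.biprod.hom_ext <;> simp [hα, S2]
  · apply Limits.biprod.hom_ext <;> apply Limits.biprod.hom_ext' <;>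
      simp [Preadditive.comp_add, Preadditive.comp_neg, S2] <;> abel
  · apply Limits.biprod.hom_ext' <;> simp [hμ, S2]
  · exact ⟨⟨𝟙 A, by simp [S2], by simp [S2]⟩⟩
  · exact ⟨⟨Limits.biprod.desc (Limits.biprod.lift (𝟙 B) 0)
      (Limits.biprod.lift (-(δ ≫ inv φ)) (𝟙 C)), by
        apply Limits.biprod.hom_ext <;> apply Limits.biprod.hom_ext' <;> simp, by
        apply Limits.biprod.hom_ext <;> apply Limits.biprod.hom_ext' <;> simp⟩⟩
  · exact ⟨⟨Limits.biprod.desc (Limits.biprod.lift (𝟙 D) (inv φ ≫ γ))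
      (Limits.biprod.lift 0 (𝟙 E)), by
        apply Limits.biprod.hom_ext <;> apply Limits.biprod.hom_ext' <;> simp, by
        apply Limits.biprod.hom_ext <;> apply Limits.biprod.hom_ext' <;> simp⟩⟩
  · exact ⟨⟨𝟙 F, by simp [S2], by simp [S2]⟩⟩
end

section
/- Let A = k[x_1, ..., x_n] be a polynomial algebra over a commutative ring k. Then the tensor product over 1 ≤ i ≤ n of the two-term complexes 0 → A⊗A → A⊗A → 0 with differential multiplication by x_i⊗1 − 1⊗x_i is a free resolution of A as an A⊗A-module (the Koszul resolution), where the augmentation A⊗A → A is the multiplication map. -/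
open TensorProduct

set_option maxHeartbeats 1000000
set_option synthInstance.maxHeartbeats 400000

/-- The `j`-th term of the Koszul complex on a finite family: the free module with basis the
`j`-element subsets of `ι` (the tensor product over `i ∈ ι` of the two-term complexes
`0 → S → S → 0` has this as its degree-`j` piece). -/
abbrev KoszulMod (S ι : Type) [CommRing S] [Fintype ι] [LinearOrder ι] (j : ℕ) : Type :=
  {s : Finset ι // s.card = j} → S

/-- The Koszul differential `d(m ⊗ [I]) = ∑_{i ∈ I} ± f_i · m ⊗ [I \ {i}]`, with the sign
`(−1)^{#{j ∈ I, j < i}}`. -/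
def koszulD {S ι : Type} [CommRing S] [Fintype ι] [LinearOrder ι] (f : ι → S) (j : ℕ) :
    KoszulMod S ι (j + 1) →ₗ[S] KoszulMod S ι j where
  toFun g := fun s => ∑ i ∈ (s.1ᶜ).attach,
    ((-1 : S) ^ (s.1.filter (fun a => a < (i : ι))).card) * f i *
      g ⟨insert (i : ι) s.1, by
        rw [Finset.card_insert_of_notMem (Finset.mem_compl.mp i.2), s.2]⟩
  map_add' g g' := by
    funext s
    simp [mul_add, Finset.sum_add_distrib]
  map_smul' c g := by
    funext s
    simp only [Pi.smul_apply, smul_eq_mul, RingHom.id_apply, Finset.mul_sum]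
    exact Finset.sum_congr rfl fun i _ => by ring


section Aux
open Finset MvPolynomial

variable {B : Type} [CommRing B] {ι : Type} [Fintype ι] [LinearOrder ι]

/-- "Division" operator: keep monomials whose minimal variable is exactly `m`, divide by `X m`. -/
noncomputable def Dop (m : ι) (p : MvPolynomial ι B) : MvPolynomial ι B :=
  ∑ a ∈ p.support, if a m ≠ 0 ∧ ∀ j, j < m → a j = 0 then
    monomial (a - Finsupp.single m 1) (coeff a p) else 0

lemma coeff_Dop (m : ι) (p : MvPolynomial ι B) (b : ι →₀ ℕ) :
    coeff b (Dop m p) =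
      if ∀ j, j < m → b j = 0 then coeff (b + Finsupp.single m 1) p else 0 := by
  classical
  rw [Dop, coeff_sum]
  have key : ∀ a : ι →₀ ℕ,
      coeff b (if a m ≠ 0 ∧ ∀ j, j < m → a j = 0 then
        monomial (a - Finsupp.single m 1) (coeff a p) else 0)
      = if (∀ j, j < m → b j = 0) ∧ a = b + Finsupp.single m 1 then coeff a p else 0 := by
    intro a
    have hiff : (a m ≠ 0 ∧ (∀ j, j < m → a j = 0)) ∧ a - Finsupp.single m 1 = b
        ↔ (∀ j, j < m → b j = 0) ∧ a = b + Finsupp.single m 1 := by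
      constructor
      · rintro ⟨⟨h1, h2⟩, rfl⟩
        constructor
        · intro j hj
          have hne : m ≠ j := fun h => absurd (h ▸ hj) (lt_irrefl _)
          simp only [Finsupp.tsub_apply, Finsupp.single_eq_of_ne' hne]
          simp [h2 j hj]
        · ext j
          rcases eq_or_ne m j with rfl | hne
          · simp only [Finsupp.add_apply, Finsupp.tsub_apply, Finsupp.single_eq_same]
            omega
          · simp only [Finsupp.add_apply, Finsupp.tsub_apply, Finsupp.single_eq_of_ne' hne]
            omega
      · rintro ⟨h1, rfl⟩
        refine ⟨⟨?_, ?_⟩, ?_⟩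
        · simp [Finsupp.add_apply, Finsupp.single_eq_same]
        · intro j hj
          have hne : m ≠ j := fun h => absurd (h ▸ hj) (lt_irrefl _)
          simp only [Finsupp.add_apply, Finsupp.single_eq_of_ne' hne, add_zero]
          exact h1 j hj
        · ext j
          rcases eq_or_ne m j with rfl | hne
          · simp only [Finsupp.tsub_apply, Finsupp.add_apply, Finsupp.single_eq_same]
            omega
          · simp only [Finsupp.tsub_apply, Finsupp.add_apply, Finsupp.single_eq_of_ne' hne]
            omega
    split_ifs with h1 h2 h2
    · rw [coeff_monomial, if_pos (hiff.mpr h2).2]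
    · rw [coeff_monomial, if_neg]
      intro hab
      exact h2 (hiff.mp ⟨h1, hab⟩)
    · exact absurd (hiff.mpr h2).1 h1
    · simp
  rw [Finset.sum_congr rfl (fun a _ => key a)]
  split_ifs with h
  · simp only [eq_true h, true_and]
    rw [Finset.sum_ite_eq' p.support (b + Finsupp.single m 1) (fun a => coeff a p)]
    split_ifs with hmem
    · rfl
    · exact (MvPolynomial.notMem_support_iff.mp hmem).symm
  · simp only [eq_false h, false_and, if_false, Finset.sum_const_zero]

lemma Dop_add (m : ι) (p q : MvPolynomial ι B) : Dop m (p + q) = Dop m p + Dop m q := by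
  apply MvPolynomial.ext
  intro b
  simp only [coeff_add, coeff_Dop]
  split_ifs <;> simp

noncomputable def DopHom (m : ι) : MvPolynomial ι B →+ MvPolynomial ι B :=
  AddMonoidHom.mk' (Dop m) (Dop_add m)

lemma Dop_zero (m : ι) : Dop m (0 : MvPolynomial ι B) = 0 := (DopHom m).map_zero

lemma Dop_sum {α : Type} (m : ι) (t : Finset α) (f : α → MvPolynomial ι B) :
    Dop m (∑ a ∈ t, f a) = ∑ a ∈ t, Dop m (f a) := map_sum (DopHom m) f t

lemma Dop_C_mul (m : ι) (c : B) (p : MvPolynomial ι B) :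
    Dop m (C c * p) = C c * Dop m p := by
  apply MvPolynomial.ext
  intro b
  simp only [coeff_C_mul, coeff_Dop]
  split_ifs <;> simp

lemma Dop_mul_X_of_lt {i m : ι} (h : i < m) (p : MvPolynomial ι B) :
    Dop m (p * X i) = 0 := by
  apply MvPolynomial.ext
  intro b
  rw [coeff_Dop, coeff_zero]
  split_ifs with h1
  · rw [coeff_mul_X', if_neg]
    simp only [Finsupp.mem_support_iff, Finsupp.add_apply,
      Finsupp.single_eq_of_ne' (ne_of_gt h), add_zero, ne_eq, not_not]
    exact h1 i h
  · rfl

lemma Dop_mul_X_of_gt {i m : ι} (h : m < i) (p : MvPolynomial ι B) :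
    Dop m (p * X i) = Dop m p * X i := by
  apply MvPolynomial.ext
  intro b
  rw [coeff_Dop, coeff_mul_X' b i (Dop m p), coeff_Dop, coeff_mul_X']
  have hsupp : i ∈ (b + Finsupp.single m 1).support ↔ i ∈ b.support := by
    simp only [Finsupp.mem_support_iff, Finsupp.add_apply,
      Finsupp.single_eq_of_ne' (ne_of_lt h), add_zero]
  have hcond : (∀ j, j < m → b j = 0) ↔
      (∀ j, j < m → ((b - Finsupp.single i 1) : ι →₀ ℕ) j = 0) := by
    constructor
    · intro hc j hj
      rw [Finsupp.tsub_apply, Finsupp.single_eq_of_ne' (ne_of_gt (lt_trans hj h)),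
        Nat.sub_zero]
      exact hc j hj
    · intro hc j hj
      have := hc j hj
      rwa [Finsupp.tsub_apply, Finsupp.single_eq_of_ne' (ne_of_gt (lt_trans hj h)),
        Nat.sub_zero] at this
  have hidx : b + Finsupp.single m 1 - Finsupp.single i 1
      = b - Finsupp.single i 1 + Finsupp.single m 1 := by
    ext j
    simp only [Finsupp.tsub_apply, Finsupp.add_apply]
    rcases eq_or_ne m j with rfl | hne
    · simp only [Finsupp.single_eq_same, Finsupp.single_eq_of_ne' (ne_of_gt h)]
      omega
    · simp only [Finsupp.single_eq_of_ne' hne]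
      omega
  by_cases h1 : ∀ j, j < m → b j = 0
  · rw [if_pos h1, if_pos (hcond.mp h1), hidx]
    by_cases h2 : i ∈ b.support
    · rw [if_pos (hsupp.mpr h2), if_pos h2]
    · rw [if_neg (fun hh => h2 (hsupp.mp hh)), if_neg h2]
  · rw [if_neg h1, if_neg (fun hh => h1 (hcond.mpr hh))]
    by_cases h2 : i ∈ b.support
    · rw [if_pos h2]
    · rw [if_neg h2]

lemma coeff_Dop_mul_X (i : ι) (p : MvPolynomial ι B) (b : ι →₀ ℕ) :
    coeff b (Dop i p * X i) =
      if b i ≠ 0 ∧ ∀ j, j < i → b j = 0 then coeff b p else 0 := by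
  rw [coeff_mul_X']
  by_cases hi : i ∈ b.support
  · rw [if_pos hi, coeff_Dop]
    have hb : b - Finsupp.single i 1 + Finsupp.single i 1 = b := by
      apply tsub_add_cancel_of_le
      rw [Finsupp.single_le_iff]
      simpa [Finsupp.mem_support_iff, Nat.one_le_iff_ne_zero] using hi
    rw [hb]
    have hbi : b i ≠ 0 := Finsupp.mem_support_iff.mp hi
    have hcond : (∀ j, j < i → ((b - Finsupp.single i 1) : ι →₀ ℕ) j = 0) ↔
        (∀ j, j < i → b j = 0) := by
      constructor
      · intro hc j hj
        have := hc j hj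
        rwa [Finsupp.tsub_apply, Finsupp.single_eq_of_ne' (ne_of_gt hj), Nat.sub_zero] at this
      · intro hc j hj
        rw [Finsupp.tsub_apply, Finsupp.single_eq_of_ne' (ne_of_gt hj), Nat.sub_zero]
        exact hc j hj
    split_ifs with h1 h2 h2
    · rfl
    · exact absurd ⟨hbi, hcond.mp h1⟩ h2
    · exact absurd h2.2 (fun hh => h1 (hcond.mpr hh))
    · rfl
  · rw [if_neg hi, if_neg]
    rintro ⟨hb, -⟩
    exact hb (by simpa [Finsupp.mem_support_iff] using hi)

lemma Dop_homotopy_self (m : ι) (p : MvPolynomial ι B) :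
    Dop m (p * X m) + ∑ i ∈ univ.filter (· < m), Dop i p * X i = p := by
  apply MvPolynomial.ext
  intro b
  rw [coeff_add, coeff_sum, coeff_Dop]
  have hterm : ∀ i : ι, coeff b (Dop i p * X i) =
      if b i ≠ 0 ∧ ∀ j, j < i → b j = 0 then coeff b p else 0 :=
    fun i => coeff_Dop_mul_X i p b
  rw [Finset.sum_congr rfl (fun i _ => hterm i)]
  by_cases h : ∀ j, j < m → b j = 0
  · rw [if_pos h, coeff_mul_X', if_pos, add_tsub_cancel_right]
    · rw [Finset.sum_eq_zero, add_zero]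
      intro i hi
      rw [Finset.mem_filter] at hi
      rw [if_neg]
      rintro ⟨hb, -⟩
      exact hb (h i hi.2)
    · simp [Finsupp.mem_support_iff, Finsupp.add_apply, Finsupp.single_eq_same]
  · rw [if_neg h, zero_add]
    push_neg at h
    obtain ⟨j0, hj0m, hj0⟩ := h
    have hT : (univ.filter (fun j => j < m ∧ b j ≠ 0)).Nonempty :=
      ⟨j0, by simp [hj0m, hj0]⟩
    set i0 := (univ.filter (fun j => j < m ∧ b j ≠ 0)).min' hT with hi0def
    have hi0 : i0 ∈ univ.filter (fun j => j < m ∧ b j ≠ 0) := Finset.min'_mem _ hT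
    rw [Finset.mem_filter] at hi0
    have hmem : i0 ∈ univ.filter (fun x => x < m) :=
      Finset.mem_filter.mpr ⟨Finset.mem_univ _, hi0.2.1⟩
    rw [Finset.sum_eq_single_of_mem i0 hmem]
    · rw [if_pos]
      refine ⟨hi0.2.2, fun j hj => ?_⟩
      by_contra hbj
      have hjmem : j ∈ univ.filter (fun j => j < m ∧ b j ≠ 0) :=
        Finset.mem_filter.mpr ⟨Finset.mem_univ _, lt_trans hj hi0.2.1, hbj⟩
      exact absurd (Finset.min'_le _ _ hjmem) (not_le.mpr hj)
    · intro i hi hine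
      rw [Finset.mem_filter] at hi
      rw [if_neg]
      rintro ⟨hbi, hall⟩
      have himem : i ∈ univ.filter (fun j => j < m ∧ b j ≠ 0) :=
        Finset.mem_filter.mpr ⟨Finset.mem_univ _, hi.2, hbi⟩
      have : i0 ≤ i := Finset.min'_le _ _ himem
      have : i0 < i := lt_of_le_of_ne this (Ne.symm hine)
      exact hi0.2.2 (hall i0 this)

lemma Dop_homotopy_univ (p : MvPolynomial ι B) :
    ∑ i ∈ univ, Dop i p * X i = p - C (constantCoeff p) := by
  apply MvPolynomial.ext
  intro b
  rw [coeff_sum, coeff_sub, Finset.sum_congr rfl (fun i _ => coeff_Dop_mul_X i p b)]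
  by_cases hb : b = 0
  · subst hb
    rw [Finset.sum_eq_zero]
    · simp [coeff_C, constantCoeff_eq]
    · intro i _
      simp
  · have hT : (univ.filter (fun j => b j ≠ 0)).Nonempty := by
      obtain ⟨j0, hj0⟩ := Finsupp.ne_iff.mp hb
      exact ⟨j0, by simp at hj0 ⊢; exact hj0⟩
    set i0 := (univ.filter (fun j => b j ≠ 0)).min' hT with hi0def
    have hi0 : i0 ∈ univ.filter (fun j => b j ≠ 0) := Finset.min'_mem _ hT
    rw [Finset.mem_filter] at hi0
    rw [Finset.sum_eq_single_of_mem i0 (Finset.mem_univ _)]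
    · rw [if_pos, coeff_C, if_neg (Ne.symm hb), sub_zero]
      refine ⟨hi0.2, fun j hj => ?_⟩
      by_contra hbj
      have hjm : j ∈ univ.filter (fun j => b j ≠ 0) :=
        Finset.mem_filter.mpr ⟨Finset.mem_univ j, hbj⟩
      exact absurd (Finset.min'_le _ j hjm) (not_le.mpr hj)
    · intro i _ hine
      rw [if_neg]
      rintro ⟨hbi, hall⟩
      have him : i ∈ univ.filter (fun j => b j ≠ 0) :=
        Finset.mem_filter.mpr ⟨Finset.mem_univ i, hbi⟩
      have h1 : i0 ≤ i := Finset.min'_le _ i him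
      have h2 : i0 < i := lt_of_le_of_ne h1 (Ne.symm hine)
      exact hi0.2 (hall i0 h2)

section Dgen
variable (S : Type) [CommRing S] {ι : Type} [Fintype ι] [LinearOrder ι]

def eps (s : Finset ι) (i : ι) : S := (-1) ^ (s.filter (· < i)).card

def Dgen (f : ι → S) (g : Finset ι → S) (s : Finset ι) : S :=
  ∑ i ∈ univ, if i ∈ s then 0 else eps S s i * f i * g (insert i s)

lemma Dgen_congr {f : ι → S} {g1 g2 : Finset ι → S} {s : Finset ι}
    (h : ∀ i, i ∉ s → g1 (insert i s) = g2 (insert i s)) :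
    Dgen S f g1 s = Dgen S f g2 s := by
  refine Finset.sum_congr rfl fun i _ => ?_
  by_cases hi : i ∈ s
  · simp [hi]
  · simp only [if_neg hi, h i hi]

lemma eps_swap {s : Finset ι} {i i' : ι} (hi : i ∉ s) (hlt : i < i') :
    eps S s i * eps S (insert i s) i' = -(eps S s i' * eps S (insert i' s) i) := by
  unfold eps
  have h1 : (insert i s).filter (· < i') = insert i (s.filter (· < i')) := by
    rw [filter_insert, if_pos hlt]
  have h2 : (insert i' s).filter (· < i) = s.filter (· < i) := by
    rw [filter_insert, if_neg (not_lt.mpr hlt.le)]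
  rw [h1, h2, card_insert_of_notMem (fun hmem => hi (mem_filter.mp hmem).1), pow_succ]
  ring

lemma eps_swap' {s : Finset ι} {i i' : ι} (hi : i ∉ s) (hi' : i' ∉ s) (hne : i ≠ i') :
    eps S s i * eps S (insert i s) i' = -(eps S s i' * eps S (insert i' s) i) := by
  rcases hne.lt_or_gt with h | h
  · exact eps_swap S hi h
  · rw [eps_swap S hi' h]; ring

lemma Dgen_Dgen (f : ι → S) (g : Finset ι → S) (s : Finset ι) :
    Dgen S f (Dgen S f g) s = 0 := by
  classical
  set T : ι → ι → S := fun i i' => if i ∈ s then 0 else if i' ∈ insert i s then 0 else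
    (eps S s i * eps S (insert i s) i') * (f i * f i' * g (insert i' (insert i s))) with hT
  have hdiag : ∀ i, T i i = 0 := by
    intro i
    by_cases hi : i ∈ s
    · exact if_pos hi
    · rw [hT]; dsimp only; rw [if_neg hi, if_pos (mem_insert_self i s)]
  have expand : Dgen S f (Dgen S f g) s = ∑ i ∈ univ, ∑ i' ∈ univ, T i i' := by
    unfold Dgen
    refine Finset.sum_congr rfl fun i _ => ?_
    by_cases hi : i ∈ s
    · rw [if_pos hi, Finset.sum_eq_zero]
      intro i' _
      rw [hT]; dsimp only; rw [if_pos hi]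
    · rw [if_neg hi, Finset.mul_sum]
      refine Finset.sum_congr rfl fun i' _ => ?_
      by_cases hi' : i' ∈ insert i s
      · rw [hT]; dsimp only; simp only [if_neg hi, if_pos hi', mul_zero]
      · rw [hT]; dsimp only; simp only [if_neg hi, if_neg hi']
        ring
  rw [expand, ← Finset.sum_product']
  have hanti : ∀ i i' : ι, T i i' + T i' i = 0 := by
    intro i i'
    rcases eq_or_ne i i' with rfl | hne
    · rw [hdiag, add_zero]
    by_cases hi : i ∈ s
    · have e1 : T i i' = 0 := if_pos hi
      have e2 : T i' i = 0 := by
        by_cases hi2 : i' ∈ s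
        · exact if_pos hi2
        · rw [hT]; dsimp only; rw [if_neg hi2, if_pos (mem_insert_of_mem hi)]
      rw [e1, e2, add_zero]
    by_cases hi' : i' ∈ s
    · have e1 : T i i' = 0 := by
        rw [hT]; dsimp only; rw [if_neg hi, if_pos (mem_insert_of_mem hi')]
      have e2 : T i' i = 0 := if_pos hi'
      rw [e1, e2, add_zero]
    · have g1 : i' ∉ insert i s := by
        simp only [mem_insert, not_or]
        exact ⟨hne.symm, hi'⟩
      have g2 : i ∉ insert i' s := by
        simp only [mem_insert, not_or]
        exact ⟨hne, hi⟩
      have e1 : T i i' = (eps S s i * eps S (insert i s) i') *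
          (f i * f i' * g (insert i' (insert i s))) := by
        rw [hT]; dsimp only; rw [if_neg hi, if_neg g1]
      have e2 : T i' i = (eps S s i' * eps S (insert i' s) i) *
          (f i' * f i * g (insert i (insert i' s))) := by
        rw [hT]; dsimp only; rw [if_neg hi', if_neg g2]
      rw [e1, e2, Finset.insert_comm i' i s, eps_swap' S hi hi' hne]
      ring
  refine Finset.sum_involution (fun p _ => (p.2, p.1)) ?_ ?_
    (fun a _ => Finset.mem_product.mpr ⟨Finset.mem_univ _, Finset.mem_univ _⟩)
    (fun a _ => rfl)
  · intro p _
    exact hanti p.1 p.2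
  · intro p _ hp0 heq
    apply hp0
    have h12 : p.1 = p.2 := (congrArg Prod.fst heq).symm
    show T p.1 p.2 = 0
    rw [h12, hdiag]

end Dgen


section Homotopy
open MvPolynomial
variable {B : Type} [CommRing B] {ι : Type} [Fintype ι] [LinearOrder ι]

local notation "R" => MvPolynomial ι B

lemma eps_C (s : Finset ι) (i : ι) :
    (eps R s i) = C (eps B s i) := by
  unfold eps
  rw [map_pow, map_neg, map_one]

noncomputable def Hop (g : Finset ι → R) (s : Finset ι) : R :=
  if h : s.Nonempty then Dop (s.min' h) (g (s.erase (s.min' h))) else 0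

lemma koszul_homotopy (g : Finset ι → R) (s : Finset ι) (hs : s.Nonempty) :
    Dgen R (fun i => X i) (Hop g) s
      + Hop (Dgen R (fun i => X i) g) s = g s := by
  classical
  set m := s.min' hs with hmdef
  have hm : m ∈ s := Finset.min'_mem s hs
  rw [Hop, dif_pos hs, ← hmdef]
  unfold Dgen
  rw [Dop_sum]
  rw [← Finset.sum_add_distrib]
  have key : ∀ i : ι,
      ((if i ∈ s then 0 else eps R s i * X i * Hop g (insert i s)) +
        Dop m (if i ∈ s.erase m then 0 else
          eps R (s.erase m) i * X i * g (insert i (s.erase m))))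
      = if i < m then Dop i (g s) * X i else if i = m then Dop m (g s * X m) else 0 := by
    intro i
    by_cases hi : i ∈ s
    · rcases eq_or_ne i m with rfl | hne
      · rw [if_pos hi, if_neg (Finset.notMem_erase m s), zero_add,
          if_neg (lt_irrefl m), if_pos rfl]
        have heps : eps R (s.erase m) m = 1 := by
          unfold eps
          rw [Finset.filter_false_of_mem, Finset.card_empty, pow_zero]
          intro a ha
          exact not_lt.mpr (Finset.min'_le s a (Finset.mem_of_mem_erase ha))
        rw [heps, one_mul, Finset.insert_erase hi, mul_comm (X m) (g s)]
      · rw [if_pos hi, if_pos (Finset.mem_erase.mpr ⟨hne, hi⟩), Dop_zero, add_zero,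
          if_neg, if_neg hne]
        exact not_lt.mpr (hmdef ▸ Finset.min'_le s i hi)
    · have hne : i ≠ m := fun h => hi (h ▸ hm)
      have hierase : i ∉ s.erase m := fun h => hi (Finset.mem_of_mem_erase h)
      rw [if_neg hi, if_neg hierase]
      have hins : (insert i s).Nonempty := Finset.insert_nonempty i s
      rw [Hop, dif_pos hins]
      have hmin : (insert i s).min' hins = m ⊓ i := by
        rw [Finset.min'_insert, hmdef]
        exact min_comm _ _
      have harg : eps R (s.erase m) i * X i * g (insert i (s.erase m))
          = C (eps B (s.erase m) i) * (g (insert i (s.erase m)) * X i) := by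
        rw [eps_C]; ring
      rcases lt_or_gt_of_ne hne with hlt | hgt
      · -- i < m
        have hmin2 : (insert i s).min' hins = i := by
          rw [hmin, inf_eq_right.mpr hlt.le]
        rw [if_pos hlt]
        have heps1 : eps R s i = 1 := by
          unfold eps
          rw [Finset.filter_false_of_mem, Finset.card_empty, pow_zero]
          intro a ha
          exact not_lt.mpr (lt_of_lt_of_le hlt (hmdef ▸ Finset.min'_le s a ha)).le
        rw [hmin2, Finset.erase_insert hi, heps1, one_mul]
        rw [harg, Dop_C_mul, Dop_mul_X_of_lt hlt, mul_zero, add_zero, mul_comm]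
      · -- m < i
        rw [if_neg (not_lt.mpr hgt.le), if_neg hne]
        have hmin2 : (insert i s).min' hins = m := by
          rw [hmin, inf_eq_left.mpr hgt.le]
        rw [hmin2, Finset.erase_insert_of_ne hne]
        rw [harg, Dop_C_mul, Dop_mul_X_of_gt hgt]
        have hsign : eps R s i = - C (eps B (s.erase m) i) := by
          unfold eps
          rw [Finset.filter_erase]
          have hmf : m ∈ s.filter (· < i) := Finset.mem_filter.mpr ⟨hm, hgt⟩
          have hcard : (s.filter (· < i)).card
              = ((s.filter (· < i)).erase m).card + 1 := by
            rw [Finset.card_erase_of_mem hmf]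
            have : 0 < (s.filter (· < i)).card := Finset.card_pos.mpr ⟨m, hmf⟩
            omega
          rw [hcard, pow_succ, map_pow, map_neg, map_one]
          ring
        rw [hsign]
        ring
  rw [Finset.sum_congr rfl (fun i _ => key i)]
  rw [Finset.sum_ite]
  have hmem2 : m ∈ univ.filter (fun x => ¬ x < m) :=
    Finset.mem_filter.mpr ⟨Finset.mem_univ m, not_lt.mpr (le_refl m)⟩
  have hS2 : (∑ i ∈ univ.filter (fun x => ¬ x < m),
      if i = m then Dop m (g s * X m) else 0) = Dop m (g s * X m) := by
    rw [Finset.sum_eq_single_of_mem m hmem2]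
    · rw [if_pos rfl]
    · intro i _ hine
      rw [if_neg hine]
  rw [hS2, add_comm]
  exact Dop_homotopy_self m (g s)

lemma koszul_homotopy_empty (g : Finset ι → R) :
    Dgen R (fun i => X i) (Hop g) ∅ = g ∅ - C (constantCoeff (g ∅)) := by
  classical
  unfold Dgen
  have key : ∀ i : ι,
      (if i ∈ (∅ : Finset ι) then 0 else eps R ∅ i * X i * Hop g (insert i ∅))
        = Dop i (g ∅) * X i := by
    intro i
    rw [if_neg (Finset.notMem_empty i)]
    have heps : eps R ∅ i = 1 := by
      unfold eps
      rw [Finset.filter_empty, Finset.card_empty, pow_zero]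
    have hsingle : insert i (∅ : Finset ι) = {i} := Finset.insert_empty
    rw [heps, one_mul, Hop, hsingle, dif_pos (Finset.singleton_nonempty i),
      Finset.min'_singleton, Finset.erase_singleton, mul_comm]
  rw [Finset.sum_congr rfl (fun i _ => key i)]
  exact Dop_homotopy_univ (g ∅)

end Homotopy

section Typed
variable {S : Type} [CommRing S] {ι : Type} [Fintype ι] [LinearOrder ι]

def extFun {j : ℕ} (g : KoszulMod S ι j) : Finset ι → S :=
  fun t => if h : t.card = j then g ⟨t, h⟩ else 0

lemma koszulD_eq_Dgen {j : ℕ} (f : ι → S) (g : KoszulMod S ι (j+1))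
    (s : {t : Finset ι // t.card = j}) :
    koszulD f j g s = Dgen S f (extFun g) s.1 := by
  classical
  have lhs : koszulD f j g s = ∑ i ∈ (s.1ᶜ).attach,
      ((-1 : S) ^ (s.1.filter (fun a => a < (i : ι))).card) * f i *
        g ⟨insert (i : ι) s.1, by
          rw [Finset.card_insert_of_notMem (Finset.mem_compl.mp i.2), s.2]⟩ := rfl
  rw [lhs]
  have step1 : ∀ i : {x // x ∈ s.1ᶜ},
      ((-1 : S) ^ (s.1.filter (fun a => a < (i : ι))).card) * f i *
        g ⟨insert (i : ι) s.1, by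
          rw [Finset.card_insert_of_notMem (Finset.mem_compl.mp i.2), s.2]⟩
      = (fun i0 : ι => if i0 ∈ s.1 then 0
          else eps S s.1 i0 * f i0 * extFun g (insert i0 s.1)) (i : ι) := by
    intro i
    have hnotmem : (i : ι) ∉ s.1 := Finset.mem_compl.mp i.2
    have hcard : (insert (i : ι) s.1).card = j + 1 := by
      rw [Finset.card_insert_of_notMem hnotmem, s.2]
    simp only [if_neg hnotmem]
    simp only [extFun]
    rw [dif_pos hcard]
    rfl
  rw [Finset.sum_congr rfl (fun i _ => step1 i)]
  refine (Finset.sum_attach ((s : Finset ι) : Finset ι)ᶜ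
    (fun i0 => if i0 ∈ s.1 then 0 else eps S s.1 i0 * f i0 * extFun g (insert i0 s.1))).trans ?_
  unfold Dgen
  rw [← Finset.sum_filter_add_sum_filter_not Finset.univ (fun i => i ∈ s.1)]
  have hz : ∑ i ∈ Finset.univ.filter (fun i => i ∈ s.1),
      (if i ∈ s.1 then 0 else eps S s.1 i * f i * extFun g (insert i s.1)) = 0 := by
    apply Finset.sum_eq_zero
    intro i hi
    rw [if_pos (Finset.mem_filter.mp hi).2]
  rw [hz, zero_add]
  have hset : Finset.univ.filter (fun i => ¬ i ∈ s.1) = s.1ᶜ := by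
    ext i
    simp [Finset.mem_compl]
  rw [hset]

lemma koszulD_koszulD (f : ι → S) (j : ℕ) (h : KoszulMod S ι (j+2)) :
    koszulD f j (koszulD f (j+1) h) = 0 := by
  funext s
  rw [koszulD_eq_Dgen]
  have hcongr : Dgen S f (extFun (koszulD f (j+1) h)) s.1
      = Dgen S f (Dgen S f (extFun h)) s.1 := by
    apply Dgen_congr
    intro i hi
    have hcard : (insert i s.1).card = j + 1 := by
      rw [Finset.card_insert_of_notMem hi, s.2]
    simp only [extFun]
    rw [dif_pos hcard]
    exact koszulD_eq_Dgen f h ⟨insert i s.1, hcard⟩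
  rw [hcongr, Dgen_Dgen]
  rfl

end Typed

section TypedMv
open MvPolynomial
variable {B : Type} [CommRing B] {ι : Type} [Fintype ι] [LinearOrder ι]

lemma exists_koszul_preimage {j : ℕ} (g : KoszulMod (MvPolynomial ι B) ι (j+1))
    (hg : koszulD (fun i => (X i : MvPolynomial ι B)) j g = 0) :
    ∃ h : KoszulMod (MvPolynomial ι B) ι (j+2),
      koszulD (fun i => (X i : MvPolynomial ι B)) (j+1) h = g := by
  classical
  refine ⟨fun s => Hop (extFun g) s.1, ?_⟩
  funext s
  rw [koszulD_eq_Dgen]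
  have hcongr : Dgen (MvPolynomial ι B) (fun i => X i)
      (extFun (fun s : {t : Finset ι // t.card = j+2} => Hop (extFun g) s.1)) s.1
      = Dgen (MvPolynomial ι B) (fun i => X i) (Hop (extFun g)) s.1 := by
    apply Dgen_congr
    intro i hi
    have hcard : (insert i s.1).card = j + 2 := by
      rw [Finset.card_insert_of_notMem hi, s.2]
    simp only [extFun]
    rw [dif_pos hcard]
  rw [hcongr]
  have hs : s.1.Nonempty := Finset.card_pos.mp (by rw [s.2]; omega)
  have hmain := koszul_homotopy (extFun g) s.1 hs
  have hz : Hop (Dgen (MvPolynomial ι B) (fun i => X i) (extFun g)) s.1 = 0 := by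
    rw [Hop, dif_pos hs]
    have hmem := Finset.min'_mem s.1 hs
    have hcard : (s.1.erase (s.1.min' hs)).card = j := by
      rw [Finset.card_erase_of_mem hmem, s.2]
      omega
    have heq : Dgen (MvPolynomial ι B) (fun i => X i) (extFun g) (s.1.erase (s.1.min' hs))
        = koszulD (fun i => (X i : MvPolynomial ι B)) j g ⟨s.1.erase (s.1.min' hs), hcard⟩ :=
      (koszulD_eq_Dgen _ g ⟨_, hcard⟩).symm
    rw [heq, hg]
    exact Dop_zero _
  rw [hz, add_zero] at hmain
  rw [hmain]
  simp only [extFun]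
  rw [dif_pos s.2]

lemma exists_koszul_preimage0 (g : KoszulMod (MvPolynomial ι B) ι 0)
    (hg : constantCoeff (g ⟨∅, Finset.card_empty⟩) = 0) :
    ∃ h : KoszulMod (MvPolynomial ι B) ι 1,
      koszulD (fun i => (X i : MvPolynomial ι B)) 0 h = g := by
  classical
  refine ⟨fun s => Hop (extFun g) s.1, ?_⟩
  funext s
  rw [koszulD_eq_Dgen]
  obtain ⟨t, ht⟩ := s
  have hte : t = ∅ := Finset.card_eq_zero.mp ht
  subst hte
  have hcongr : Dgen (MvPolynomial ι B) (fun i => X i)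
      (extFun (fun s : {t : Finset ι // t.card = 1} => Hop (extFun g) s.1)) (∅ : Finset ι)
      = Dgen (MvPolynomial ι B) (fun i => X i) (Hop (extFun g)) ∅ := by
    apply Dgen_congr
    intro i hi
    have hcard : (insert i (∅ : Finset ι)).card = 1 := by
      rw [Finset.card_insert_of_notMem hi, Finset.card_empty]
    simp only [extFun]
    rw [dif_pos hcard]
  dsimp only
  rw [hcongr, koszul_homotopy_empty]
  have he : extFun g (∅ : Finset ι) = g ⟨∅, Finset.card_empty⟩ := by
    simp [extFun]
  rw [he, hg, map_zero, sub_zero]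

end TypedMv

lemma koszulD_comp_ringHom {S S' ι : Type} [CommRing S] [CommRing S'] [Fintype ι]
    [LinearOrder ι] (ψ : S →+* S') (f : ι → S) (j : ℕ) (g : KoszulMod S ι (j+1))
    (s : {t : Finset ι // t.card = j}) :
    koszulD (fun i => ψ (f i)) j (fun t => ψ (g t)) s = ψ (koszulD f j g s) := by
  show (∑ i ∈ (s.1ᶜ).attach, _) = ψ (∑ i ∈ (s.1ᶜ).attach, _)
  rw [map_sum]
  refine Finset.sum_congr rfl fun i _ => ?_
  rw [map_mul, map_mul, map_pow, map_neg, map_one]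

section Transfer
open MvPolynomial

variable (k : Type) [CommRing k] (n : ℕ)

local notation "A" => MvPolynomial (Fin n) k
local notation "Ae" => MvPolynomial (Fin n) k ⊗[k] MvPolynomial (Fin n) k
local notation "RR" => MvPolynomial (Fin n) (MvPolynomial (Fin n) k)

noncomputable def phiHom : RR →+* Ae :=
  eval₂Hom (Algebra.TensorProduct.includeRight : A →ₐ[k] Ae).toRingHom
    (fun i => (X i : A) ⊗ₜ[k] (1 : A) - (1 : A) ⊗ₜ[k] (X i : A))

noncomputable def f1Hom : A →ₐ[k] RR :=
  aeval (fun i => (X i : RR) + C (X i))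

noncomputable def chiHom : Ae →+* RR :=
  (Algebra.TensorProduct.lift (f1Hom k n) (IsScalarTower.toAlgHom k A RR)
    (fun _ _ => Commute.all _ _)).toRingHom

lemma phi_X (i : Fin n) :
    phiHom k n (X i) = (X i : A) ⊗ₜ[k] (1 : A) - (1 : A) ⊗ₜ[k] (X i : A) :=
  eval₂Hom_X' _ _ i

lemma phi_C (a : A) : phiHom k n (C a) = (1 : A) ⊗ₜ[k] a :=
  eval₂Hom_C _ _ a

lemma chi_tmul (a b : A) : chiHom k n (a ⊗ₜ[k] b) = f1Hom k n a * C b := by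
  show Algebra.TensorProduct.lift _ _ _ (a ⊗ₜ[k] b) = _
  rw [Algebra.TensorProduct.lift_tmul]
  rfl

lemma tmul_one_algebraMap (c : k) :
    (algebraMap k A c) ⊗ₜ[k] (1 : A) = (1 : A) ⊗ₜ[k] (algebraMap k A c) := by
  rw [Algebra.algebraMap_eq_smul_one, smul_tmul]

lemma phi_f1 (a : A) : phiHom k n (f1Hom k n a) = a ⊗ₜ[k] (1 : A) := by
  have hext : (phiHom k n).comp (f1Hom k n).toRingHom
      = (Algebra.TensorProduct.includeLeft : A →ₐ[k] Ae).toRingHom := by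
    apply MvPolynomial.ringHom_ext
    · intro c
      show phiHom k n (f1Hom k n (C c)) = (C c : A) ⊗ₜ[k] (1 : A)
      have h1 : f1Hom k n (C c) = algebraMap k RR c := aeval_C _ c
      have h2 : algebraMap k RR c = C (algebraMap k A c) :=
        IsScalarTower.algebraMap_apply k A RR c
      rw [h1, h2, phi_C]
      exact (tmul_one_algebraMap k n c).symm
    · intro i
      show phiHom k n (f1Hom k n (X i)) = (X i : A) ⊗ₜ[k] (1 : A)
      have h1 : f1Hom k n (X i) = (X i : RR) + C (X i) := aeval_X _ i
      rw [h1, map_add, phi_X, phi_C, sub_add_cancel]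
  exact congrFun (congrArg (fun f => f.toFun) hext) a

lemma chi_phi (p : RR) : chiHom k n (phiHom k n p) = p := by
  have hext : (chiHom k n).comp (phiHom k n) = RingHom.id RR := by
    apply MvPolynomial.ringHom_ext
    · intro a
      show chiHom k n (phiHom k n (C a)) = C a
      rw [phi_C, chi_tmul, map_one, one_mul]
    · intro i
      show chiHom k n (phiHom k n (X i)) = X i
      rw [phi_X, map_sub, chi_tmul, chi_tmul, map_one, map_one, one_mul, mul_one]
      have h1 : f1Hom k n (X i) = (X i : RR) + C (X i) := aeval_X _ i
      rw [h1]
      ring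
  exact congrFun (congrArg (fun f => f.toFun) hext) p

lemma phi_chi (z : Ae) : phiHom k n (chiHom k n z) = z := by
  induction z using TensorProduct.induction_on with
  | zero => rw [map_zero, map_zero]
  | tmul a b =>
      rw [chi_tmul, map_mul, phi_f1, phi_C, Algebra.TensorProduct.tmul_mul_tmul,
        mul_one, one_mul]
  | add x y hx hy => rw [map_add, map_add, hx, hy]

lemma chi_theta (i : Fin n) :
    chiHom k n ((X i : A) ⊗ₜ[k] (1 : A) - (1 : A) ⊗ₜ[k] (X i : A)) = X i := by
  rw [map_sub, chi_tmul, chi_tmul, map_one, map_one, one_mul, mul_one]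
  have h1 : f1Hom k n (X i) = (X i : RR) + C (X i) := aeval_X _ i
  rw [h1]
  ring

lemma constantCoeff_f1 (a : A) : constantCoeff (f1Hom k n a) = a := by
  have hext : (constantCoeff : RR →+* A).comp (f1Hom k n).toRingHom = RingHom.id A := by
    apply MvPolynomial.ringHom_ext
    · intro c
      show constantCoeff (f1Hom k n (C c)) = C c
      have h1 : f1Hom k n (C c) = algebraMap k RR c := aeval_C _ c
      have h2 : algebraMap k RR c = C (algebraMap k A c) :=
        IsScalarTower.algebraMap_apply k A RR c
      rw [h1, h2, constantCoeff_C]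
      rfl
    · intro i
      show constantCoeff (f1Hom k n (X i)) = X i
      have h1 : f1Hom k n (X i) = (X i : RR) + C (X i) := aeval_X _ i
      rw [h1, map_add, constantCoeff_X, constantCoeff_C, zero_add]
  exact congrFun (congrArg (fun f => f.toFun) hext) a

lemma constantCoeff_chi (z : Ae) :
    constantCoeff (chiHom k n z) = Algebra.TensorProduct.lmul' k (S := A) z := by
  induction z using TensorProduct.induction_on with
  | zero => simp
  | tmul a b =>
      rw [chi_tmul, map_mul, constantCoeff_f1, constantCoeff_C,
        Algebra.TensorProduct.lmul'_apply_tmul]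
  | add x y hx hy => rw [map_add, map_add, map_add, hx, hy]


lemma lmul'_theta (i : Fin n) :
    Algebra.TensorProduct.lmul' k (S := A)
      ((X i : A) ⊗ₜ[k] (1 : A) - (1 : A) ⊗ₜ[k] (X i : A)) = 0 := by
  rw [map_sub, Algebra.TensorProduct.lmul'_apply_tmul,
    Algebra.TensorProduct.lmul'_apply_tmul, mul_one, one_mul, sub_self]

end Transfer


end Aux

/-- Let `A = k[x_1, ..., x_n]` be a polynomial algebra over a commutative ring `k`.  The tensor
product over `1 ≤ i ≤ n` of the two-term complexes `0 → A⊗A → A⊗A → 0` with differentials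
multiplication by `x_i ⊗ 1 − 1 ⊗ x_i` (i.e. the Koszul complex on these elements) is a free
resolution of `A` as an `A⊗A`-module, the augmentation `A⊗A → A` being the multiplication
map: each term is free, the augmentation is surjective, and the complex is exact. -/
theorem stmt_6 (k : Type) [CommRing k] (n : ℕ) :
    let A := MvPolynomial (Fin n) k
    let Ae := A ⊗[k] A
    let θ : Fin n → Ae := fun i =>
      (MvPolynomial.X i : A) ⊗ₜ[k] (1 : A) - (1 : A) ⊗ₜ[k] (MvPolynomial.X i : A)
    letI : Module Ae A := Module.compHom A (Algebra.TensorProduct.lmul' k (S := A)).toRingHom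
    let aug : KoszulMod Ae (Fin n) 0 →ₗ[Ae] A := {
      toFun := fun g => Algebra.TensorProduct.lmul' k (S := A) (g ⟨∅, Finset.card_empty⟩)
      map_add' := fun g g' => by simp
      map_smul' := fun c g => by
        simp only [Pi.smul_apply, smul_eq_mul, RingHom.id_apply, map_mul]
        rfl }
    (∀ j : ℕ, Module.Free Ae (KoszulMod Ae (Fin n) j)) ∧
    Function.Surjective aug ∧
    LinearMap.ker aug = LinearMap.range (koszulD θ 0) ∧
    ∀ j : ℕ, LinearMap.ker (koszulD θ j) = LinearMap.range (koszulD θ (j + 1)) := by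
  intro A Ae θ aug
  have hθ : ∀ i : Fin n, θ i = phiHom k n (MvPolynomial.X i) := fun i => (phi_X k n i).symm
  have hθfun : θ = fun i => phiHom k n (MvPolynomial.X i) := funext hθ
  have hXfun : (fun i : Fin n => (MvPolynomial.X i : MvPolynomial (Fin n) A))
      = fun i => chiHom k n (θ i) := funext fun i => (chi_theta k n i).symm
  refine ⟨?_, ?_, ?_, ?_⟩
  · intro j
    infer_instance
  · intro a
    refine ⟨fun _ => (1 : A) ⊗ₜ[k] a, ?_⟩
    show Algebra.TensorProduct.lmul' k (S := A) ((1 : A) ⊗ₜ[k] a) = a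
    rw [Algebra.TensorProduct.lmul'_apply_tmul, one_mul]
  · -- ker aug = range d0
    ext g
    simp only [LinearMap.mem_ker, LinearMap.mem_range]
    constructor
    · intro hg
      have hg0 : Algebra.TensorProduct.lmul' k (S := A) (g ⟨∅, Finset.card_empty⟩) = 0 := hg
      set g' : KoszulMod (MvPolynomial (Fin n) A) (Fin n) 0 := fun t => chiHom k n (g t)
        with hg'def
      have hc : MvPolynomial.constantCoeff (g' ⟨∅, Finset.card_empty⟩) = 0 := by
        rw [hg'def]
        show MvPolynomial.constantCoeff (chiHom k n (g ⟨∅, Finset.card_empty⟩)) = 0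
        rw [constantCoeff_chi, hg0]
      obtain ⟨h', hh'⟩ := exists_koszul_preimage0 g' hc
      refine ⟨fun t => phiHom k n (h' t), ?_⟩
      funext s
      rw [hθfun]
      rw [koszulD_comp_ringHom (phiHom k n) (fun i => MvPolynomial.X i) 0 h' s]
      rw [hh']
      exact phi_chi k n (g s)
    · rintro ⟨h, rfl⟩
      show Algebra.TensorProduct.lmul' k (S := A)
        (koszulD θ 0 h ⟨∅, Finset.card_empty⟩) = 0
      rw [koszulD_eq_Dgen θ h ⟨∅, Finset.card_empty⟩]
      unfold Dgen
      rw [map_sum]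
      apply Finset.sum_eq_zero
      intro i _
      rw [if_neg (Finset.notMem_empty i), map_mul, map_mul, lmul'_theta, mul_zero, zero_mul]
  · intro j
    ext g
    simp only [LinearMap.mem_ker, LinearMap.mem_range]
    constructor
    · intro hg
      set g' : KoszulMod (MvPolynomial (Fin n) A) (Fin n) (j+1) := fun t => chiHom k n (g t)
        with hg'def
      have hg' : koszulD (fun i => (MvPolynomial.X i : MvPolynomial (Fin n) A)) j g' = 0 := by
        funext s
        rw [hXfun]
        rw [hg'def]
        show koszulD (fun i => chiHom k n (θ i)) j (fun t => chiHom k n (g t)) s = 0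
        rw [koszulD_comp_ringHom (chiHom k n) θ j g s]
        rw [hg]
        exact map_zero _
      obtain ⟨h', hh'⟩ := exists_koszul_preimage g' hg'
      refine ⟨fun t => phiHom k n (h' t), ?_⟩
      funext s
      rw [hθfun]
      rw [koszulD_comp_ringHom (phiHom k n) (fun i => MvPolynomial.X i) (j+1) h' s]
      rw [hh']
      exact phi_chi k n (g s)
    · rintro ⟨h, rfl⟩
      exact koszulD_koszulD θ j h
end

section
/- The elements x_k + x_l − x_i − x_j and x_k x_l − x_i x_j form a regular sequence in the polynomial ring Z[x_i, x_j, x_k, x_l], and the quotient Z[x_i, x_j, x_k, x_l]/(x_i + x_j − x_k − x_l, x_k x_l − x_i x_j) is isomorphic, as a bimodule over Z[x_1, x_2], to the Soergel bimodule B'_1 = Z[x_1, x_2] ⊗_{Z[x_1,x_2]^{S_2}} Z[x_1, x_2], where the left action is by x_i, x_j and the right action by x_k, x_l. -/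
open MvPolynomial TensorProduct Pointwise
set_option maxHeartbeats 2000000
set_option synthInstance.maxHeartbeats 1000000
noncomputable section
abbrev R4 : Type := MvPolynomial (Fin 4) ℤ
abbrev S2 : Type := MvPolynomial (Fin 2) ℤ
abbrev AA : Subalgebra ℤ S2 := MvPolynomial.symmetricSubalgebra (Fin 2) ℤ
abbrev B2 : Type := S2 ⊗[↥AA] S2
def ll : R4 := X 2 + X 3 - X 0 - X 1
def qq : R4 := X 2 * X 3 - X 0 * X 1
def II : Ideal R4 := Ideal.span {ll, qq}
abbrev QQ : Type := R4 ⧸ II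

def ev : R4 →ₐ[ℤ] MvPolynomial (Fin 3) ℤ := aeval ![X 0, X 1, X 2, X 0 + X 1 - X 2]
def sec : MvPolynomial (Fin 3) ℤ →ₐ[ℤ] R4 := aeval ![X 0, X 1, X 2]

lemma mk_sec_ev : (Ideal.Quotient.mkₐ ℤ (Ideal.span {ll})).comp (sec.comp ev)
    = Ideal.Quotient.mkₐ ℤ (Ideal.span {ll}) := by
  apply MvPolynomial.algHom_ext
  intro i
  simp only [AlgHom.coe_comp, Function.comp_apply, Ideal.Quotient.mkₐ_eq_mk]
  have h4 : i = 0 ∨ i = 1 ∨ i = 2 ∨ i = 3 := by omega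
  rcases h4 with rfl | rfl | rfl | rfl <;>
    simp only [ev, sec, aeval_X, Matrix.cons_val_zero, Matrix.cons_val_one, Matrix.head_cons,
      Matrix.cons_val_two, Matrix.cons_val_three, Matrix.tail_cons]
  rw [map_sub, map_add]
  simp only [aeval_X, Matrix.cons_val_zero, Matrix.cons_val_one, Matrix.head_cons,
    Matrix.cons_val_two, Matrix.tail_cons]
  rw [Ideal.Quotient.eq]
  refine Ideal.mem_span_singleton.2 ⟨-1, ?_⟩
  simp only [ll]; ring

lemma ev_ll : ev ll = 0 := by
  simp only [ll, map_sub, map_add, ev, aeval_X, Matrix.cons_val_zero, Matrix.cons_val_one,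
    Matrix.head_cons, Matrix.cons_val_two, Matrix.cons_val_three, Matrix.tail_cons]
  ring

lemma ev_qq_ne : ev qq ≠ 0 := by
  intro h
  have h2 := congrArg (eval ![(0:ℤ), 0, 1]) h
  simp only [qq, map_sub, map_mul, ev, aeval_X, Matrix.cons_val_zero, Matrix.cons_val_one,
    Matrix.head_cons, Matrix.cons_val_two, Matrix.cons_val_three, Matrix.tail_cons, map_add,
    eval_X, map_zero] at h2
  norm_num at h2

lemma ll_ne : (ll : R4) ≠ 0 := by
  intro h
  have h2 := congrArg (eval ![(0:ℤ), 0, 1, 0]) h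
  simp [ll] at h2

lemma mem_span_ll_iff (z : R4) : z ∈ Ideal.span {ll} ↔ ev z = 0 := by
  constructor
  · intro hz
    obtain ⟨c, rfl⟩ := Ideal.mem_span_singleton'.1 hz
    rw [map_mul, ev_ll, mul_zero]
  · intro hz
    have h := AlgHom.congr_fun mk_sec_ev z
    simp only [AlgHom.coe_comp, Function.comp_apply, Ideal.Quotient.mkₐ_eq_mk] at h
    rw [hz, map_zero, map_zero] at h
    exact (Ideal.Quotient.eq_zero_iff_mem).1 h.symm

lemma regular_part : RingTheory.Sequence.IsRegular R4 [ll, qq] := by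
  constructor
  · rw [RingTheory.Sequence.isWeaklyRegular_cons_iff]
    constructor
    · simpa [IsSMulRegular, smul_eq_mul] using mul_right_injective₀ ll_ne
    · rw [RingTheory.Sequence.isWeaklyRegular_cons_iff]
      refine ⟨?_, RingTheory.Sequence.IsWeaklyRegular.nil _ _⟩
      intro a b hab
      obtain ⟨x, rfl⟩ := Submodule.Quotient.mk_surjective _ a
      obtain ⟨y, rfl⟩ := Submodule.Quotient.mk_surjective _ b
      simp only [← Submodule.Quotient.mk_smul] at hab
      rw [Submodule.Quotient.eq] at hab
      rw [Submodule.Quotient.eq]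
      have : qq • x - qq • y ∈ ll • (⊤ : Submodule R4 R4) := hab
      rw [← SetLike.mem_coe, Submodule.coe_pointwise_smul] at this
      obtain ⟨c, -, hc⟩ := Set.mem_smul_set.1 this
      simp only [smul_eq_mul] at hc
      have hc2 : qq * (x - y) = ll * c := by
        rw [mul_sub, ← hc]
      have hev : ev qq * ev (x - y) = ev ll * ev c := by
        rw [← map_mul, ← map_mul, hc2]
      rw [ev_ll, zero_mul] at hev
      have hxy : ev (x - y) = 0 := by
        rcases mul_eq_zero.1 hev with h | h
        · exact absurd h ev_qq_ne
        · exact h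
      have : x - y ∈ Ideal.span {ll} := (mem_span_ll_iff _).2 hxy
      obtain ⟨c', hc'⟩ := Ideal.mem_span_singleton'.1 this
      rw [← SetLike.mem_coe, Submodule.coe_pointwise_smul]
      exact Set.mem_smul_set.2 ⟨c', trivial, by rw [smul_eq_mul, mul_comm, hc']⟩
  · intro htop
    have h1 : (1 : R4) ∈ Ideal.ofList [ll, qq] • (⊤ : Submodule R4 R4) := by
      rw [← htop]; trivial
    have hle : Ideal.ofList [ll, qq] • (⊤ : Submodule R4 R4) ≤
        (Ideal.ofList [ll, qq] : Ideal R4) := Submodule.smul_le.2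
      (fun r hr m _ => by rw [smul_eq_mul]; exact Ideal.mul_mem_right m _ hr)
    have h2 : (1 : R4) ∈ Ideal.ofList [ll, qq] := hle h1
    have hker : (Ideal.ofList [ll, qq] : Ideal R4) ≤ RingHom.ker (eval ![(1:ℤ),0,1,0]) := by
      rw [Ideal.ofList]
      rw [Ideal.span_le]
      intro r hr
      simp only [Set.mem_setOf_eq, List.mem_cons, List.mem_singleton, List.not_mem_nil,
        or_false] at hr
      rcases hr with rfl | rfl <;>
        · rw [SetLike.mem_coe, RingHom.mem_ker]
          simp [ll, qq]
    have := hker h2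
    rw [RingHom.mem_ker, map_one] at this
    exact one_ne_zero this

def ee1 : ↥AA := ⟨esymm (Fin 2) ℤ 1, esymm_isSymmetric _ _ 1⟩
def ee2 : ↥AA := ⟨esymm (Fin 2) ℤ 2, esymm_isSymmetric _ _ 2⟩

lemma ee1_val : (ee1 : S2) = X 0 + X 1 := by
  simp [ee1, esymm_one, Fin.sum_univ_two]

lemma ee2_val : (ee2 : S2) = X 0 * X 1 := by
  have h : (2 : ℕ) = (Finset.univ : Finset (Fin 2)).card := by simp
  simp only [ee2, esymm, h, Finset.powersetCard_self, Finset.sum_singleton]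
  rw [Fin.prod_univ_two]

lemma AA_algHom_ext {T : Type*} [CommRing T] [Algebra ℤ T] {F G : ↥AA →ₐ[ℤ] T}
    (h1 : F ee1 = G ee1) (h2 : F ee2 = G ee2) : F = G := by
  have hs := esymmAlgHom_surjective (σ := Fin 2) (R := ℤ) (n := 2) (by simp)
  apply AlgHom.ext
  intro a
  obtain ⟨p, rfl⟩ := hs a
  have hcomp : F.comp (esymmAlgHom (Fin 2) ℤ 2) = G.comp (esymmAlgHom (Fin 2) ℤ 2) := by
    apply MvPolynomial.algHom_ext
    intro i
    have h : i = 0 ∨ i = 1 := by omega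
    rcases h with rfl | rfl <;> simp only [AlgHom.comp_apply, esymmAlgHom, aeval_X]
    · exact h1
    · exact h2
  exact AlgHom.congr_fun hcomp p

set_option synthInstance.maxHeartbeats 1000000 in
set_option maxHeartbeats 2000000 in
lemma tmul_comm (a : ↥AA) : (a : S2) ⊗ₜ[↥AA] (1 : S2) = (1 : S2) ⊗ₜ[↥AA] (a : S2) := by
  have h : (a : S2) = a • (1 : S2) := by
    rw [Algebra.smul_def, mul_one, Subalgebra.algebraMap_eq]; rfl
  rw [h]
  exact TensorProduct.smul_tmul (R := ↥AA) (R' := ↥AA) (M := S2) (N := S2) a 1 1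
def phi0 : R4 →ₐ[ℤ] B2 :=
  aeval ![(X 0 : S2) ⊗ₜ[↥AA] (1 : S2), (X 1 : S2) ⊗ₜ[↥AA] (1 : S2),
    (1 : S2) ⊗ₜ[↥AA] (X 0 : S2), (1 : S2) ⊗ₜ[↥AA] (X 1 : S2)]

lemma phi0_X0 : phi0 (X 0) = (X 0 : S2) ⊗ₜ[↥AA] (1 : S2) := by
  simp only [phi0, aeval_X, Matrix.cons_val_zero]
lemma phi0_X1 : phi0 (X 1) = (X 1 : S2) ⊗ₜ[↥AA] (1 : S2) := by
  simp only [phi0, aeval_X, Matrix.cons_val_one, Matrix.head_cons, Matrix.cons_val_zero]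
lemma phi0_X2 : phi0 (X 2) = (1 : S2) ⊗ₜ[↥AA] (X 0 : S2) := by
  simp only [phi0, aeval_X, Matrix.cons_val_two, Matrix.tail_cons, Matrix.head_cons]
lemma phi0_X3 : phi0 (X 3) = (1 : S2) ⊗ₜ[↥AA] (X 1 : S2) := by
  simp only [phi0, aeval_X, Matrix.cons_val_three, Matrix.tail_cons, Matrix.head_cons]

lemma phi0_ll : phi0 ll = 0 := by
  rw [ll, map_sub, map_sub, map_add, phi0_X0, phi0_X1, phi0_X2, phi0_X3]
  have h := tmul_comm ee1
  rw [ee1_val] at h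
  rw [← TensorProduct.tmul_add, ← h, TensorProduct.add_tmul]
  abel

lemma phi0_qq : phi0 qq = 0 := by
  rw [qq, map_sub, map_mul, map_mul, phi0_X0, phi0_X1, phi0_X2, phi0_X3]
  have h := tmul_comm ee2
  rw [ee2_val] at h
  simp only [Algebra.TensorProduct.tmul_mul_tmul, one_mul, mul_one]
  rw [← h, sub_self]

def aev01 : S2 →ₐ[ℤ] R4 := aeval ![X 0, X 1]
def aev23 : S2 →ₐ[ℤ] R4 := aeval ![X 2, X 3]

lemma ll_mem : ll ∈ II := Ideal.subset_span (Set.mem_insert _ _)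
lemma qq_mem : qq ∈ II := Ideal.subset_span (Set.mem_insert_of_mem _ rfl)

lemma mk_symm (a : ↥AA) :
    Ideal.Quotient.mk II (aev23 (a : S2)) = Ideal.Quotient.mk II (aev01 (a : S2)) := by
  have h : (Ideal.Quotient.mkₐ ℤ II).comp (aev23.comp AA.val)
      = (Ideal.Quotient.mkₐ ℤ II).comp (aev01.comp AA.val) := by
    apply AA_algHom_ext
    · simp only [AlgHom.comp_apply, Subalgebra.coe_val, ee1_val, Ideal.Quotient.mkₐ_eq_mk,
        aev01, aev23]
      rw [Ideal.Quotient.eq]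
      have hx : (aeval ![(X 2 : R4), X 3]) ((X 0 : S2) + X 1)
          - (aeval ![(X 0 : R4), X 1]) ((X 0 : S2) + X 1) = ll := by
        simp only [map_add, aeval_X, Matrix.cons_val_zero, Matrix.cons_val_one,
          Matrix.head_cons, ll]
        ring
      rw [hx]; exact ll_mem
    · simp only [AlgHom.comp_apply, Subalgebra.coe_val, ee2_val, Ideal.Quotient.mkₐ_eq_mk,
        aev01, aev23]
      rw [Ideal.Quotient.eq]
      have hx : (aeval ![(X 2 : R4), X 3]) ((X 0 : S2) * X 1)
          - (aeval ![(X 0 : R4), X 1]) ((X 0 : S2) * X 1) = qq := by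
        simp only [map_mul, aeval_X, Matrix.cons_val_zero, Matrix.cons_val_one,
          Matrix.head_cons, qq]
      rw [hx]; exact qq_mem
  exact AlgHom.congr_fun h a

def algAQ : Algebra ↥AA QQ :=
  RingHom.toAlgebra ((Ideal.Quotient.mk II).comp
    (aev01.toRingHom.comp (AA.val.toRingHom : ↥AA →+* S2)))

attribute [local instance] algAQ

def towerAQ : IsScalarTower ↥AA ↥AA QQ :=
  ⟨fun a b q => by
    rw [smul_eq_mul, Algebra.smul_def, map_mul, mul_assoc, ← Algebra.smul_def,
      ← Algebra.smul_def]⟩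

attribute [local instance] towerAQ

def Lhom : S2 →ₐ[↥AA] QQ where
  toRingHom := (Ideal.Quotient.mk II).comp aev01.toRingHom
  commutes' := fun a => rfl

def Rhom : S2 →ₐ[↥AA] QQ where
  toRingHom := (Ideal.Quotient.mk II).comp aev23.toRingHom
  commutes' := fun a => mk_symm a

def psi : B2 →ₐ[↥AA] QQ :=
  Algebra.TensorProduct.lift Lhom Rhom (fun x y => Commute.all _ _)

lemma psi_tmul (x y : S2) :
    psi (x ⊗ₜ[↥AA] y) = Ideal.Quotient.mk II (aev01 x) * Ideal.Quotient.mk II (aev23 y) := by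
  rw [psi]; erw [Algebra.TensorProduct.lift_tmul]
  rfl

lemma phi0_vanish : ∀ z ∈ II, phi0 z = 0 := by
  intro z hz
  have hle : II ≤ RingHom.ker phi0.toRingHom := by
    rw [II, Ideal.span_le]
    rintro r (rfl | rfl)
    · simpa [RingHom.mem_ker] using phi0_ll
    · simpa [RingHom.mem_ker] using phi0_qq
  exact hle hz

def phi' : QQ →+* B2 := Ideal.Quotient.lift II phi0.toRingHom phi0_vanish

lemma phi'_mk (z : R4) : phi' (Ideal.Quotient.mk II z) = phi0 z :=
  Ideal.Quotient.lift_mk _ _ _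

lemma phi0_aev01 (p : S2) : phi0 (aev01 p) = p ⊗ₜ[↥AA] (1 : S2) := by
  have h : phi0.comp aev01
      = (Algebra.TensorProduct.includeLeft : S2 →ₐ[↥AA] B2).restrictScalars ℤ := by
    apply MvPolynomial.algHom_ext
    intro i
    have hi : i = 0 ∨ i = 1 := by omega
    rcases hi with rfl | rfl <;>
      simp only [AlgHom.comp_apply, AlgHom.coe_restrictScalars',
        Algebra.TensorProduct.includeLeft_apply, aev01, aeval_X, Matrix.cons_val_zero,
        Matrix.cons_val_one, Matrix.head_cons, phi0_X0, phi0_X1]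
  exact AlgHom.congr_fun h p

lemma phi0_aev23 (p : S2) : phi0 (aev23 p) = (1 : S2) ⊗ₜ[↥AA] p := by
  have h : phi0.comp aev23
      = ((Algebra.TensorProduct.includeRight : S2 →ₐ[↥AA] B2)).restrictScalars ℤ := by
    apply MvPolynomial.algHom_ext
    intro i
    have hi : i = 0 ∨ i = 1 := by omega
    rcases hi with rfl | rfl <;>
      simp only [AlgHom.comp_apply, AlgHom.coe_restrictScalars',
        Algebra.TensorProduct.includeRight_apply, aev23, aeval_X, Matrix.cons_val_zero,
        Matrix.cons_val_one, Matrix.head_cons, phi0_X2, phi0_X3]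
  exact AlgHom.congr_fun h p

lemma right_inv_pt (y : B2) : phi' (psi y) = y := by
  induction y using TensorProduct.induction_on with
  | zero => rw [map_zero, map_zero]
  | add a b ha hb => rw [map_add, map_add, ha, hb]
  | tmul a b =>
      rw [psi_tmul, map_mul, phi'_mk, phi'_mk, phi0_aev01, phi0_aev23,
        Algebra.TensorProduct.tmul_mul_tmul, mul_one, one_mul]

lemma left_inv_pt (x : QQ) : psi (phi' x) = x := by
  obtain ⟨z, rfl⟩ := Ideal.Quotient.mk_surjective x
  rw [phi'_mk]
  induction z using MvPolynomial.induction_on with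
  | C a =>
      rw [show (C a : R4) = ((a : ℤ) : R4) from eq_intCast (MvPolynomial.C : ℤ →+* R4) a]
      rw [map_intCast, map_intCast, map_intCast]
  | add p r hp hr => rw [map_add, map_add, map_add, hp, hr]
  | mul_X p i hp =>
      rw [map_mul, map_mul, map_mul, hp]
      congr 1
      have hi : i = 0 ∨ i = 1 ∨ i = 2 ∨ i = 3 := by omega
      rcases hi with rfl | rfl | rfl | rfl
      · rw [phi0_X0, psi_tmul]; simp [aev01, aev23]
      · rw [phi0_X1, psi_tmul]; simp [aev01, aev23]
      · rw [phi0_X2, psi_tmul]; simp [aev01, aev23]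
      · rw [phi0_X3, psi_tmul]; simp [aev01, aev23]

def eIso : QQ ≃+* B2 where
  toFun := phi'
  invFun := psi
  left_inv := left_inv_pt
  right_inv := right_inv_pt
  map_mul' := map_mul phi'
  map_add' := map_add phi'


/-- The elements `x_k + x_l − x_i − x_j` and `x_k x_l − x_i x_j` form a regular sequence in
`ℤ[x_i, x_j, x_k, x_l]` (variables `X 0, X 1, X 2, X 3` standing for `x_i, x_j, x_k, x_l`), and
the quotient by the ideal they generate is isomorphic, as a bimodule over `ℤ[x_1, x_2]`, to the
Soergel bimodule `B'_1 = ℤ[x_1,x_2] ⊗_{ℤ[x_1,x_2]^{S_2}} ℤ[x_1,x_2]`: there is a ring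
isomorphism sending `x_i, x_j` to `x_1⊗1, x_2⊗1` (the left action) and `x_k, x_l` to
`1⊗x_1, 1⊗x_2` (the right action). -/
theorem stmt_9 :
    let R := MvPolynomial (Fin 4) ℤ
    let l : R := X 2 + X 3 - X 0 - X 1
    let q : R := X 2 * X 3 - X 0 * X 1
    let S := MvPolynomial (Fin 2) ℤ
    let Ssym := MvPolynomial.symmetricSubalgebra (Fin 2) ℤ
    let B := S ⊗[↥Ssym] S
    RingTheory.Sequence.IsRegular R [l, q] ∧
    ∃ e : (R ⧸ Ideal.span {l, q}) ≃+* B,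
      e (Ideal.Quotient.mk _ (X 0)) = (X 0 : S) ⊗ₜ[↥Ssym] (1 : S) ∧
      e (Ideal.Quotient.mk _ (X 1)) = (X 1 : S) ⊗ₜ[↥Ssym] (1 : S) ∧
      e (Ideal.Quotient.mk _ (X 2)) = (1 : S) ⊗ₜ[↥Ssym] (X 0 : S) ∧
      e (Ideal.Quotient.mk _ (X 3)) = (1 : S) ⊗ₜ[↥Ssym] (X 1 : S) := by
  intro R l q S Ssym B
  refine ⟨regular_part, eIso, ?_, ?_, ?_, ?_⟩
  · show phi' (Ideal.Quotient.mk II (X 0)) = _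
    rw [phi'_mk, phi0_X0]
  · show phi' (Ideal.Quotient.mk II (X 1)) = _
    rw [phi'_mk, phi0_X1]
  · show phi' (Ideal.Quotient.mk II (X 2)) = _
    rw [phi'_mk, phi0_X2]
  · show phi' (Ideal.Quotient.mk II (X 3)) = _
    rw [phi'_mk, phi0_X3]

end
end

section
/- Let R = k[x_1, ..., x_n] and let i, j be distant indices (|i − j| ≥ 2). Then B_i ⊗_R B_j ≅ B_j ⊗_R B_i as graded R-bimodules, where B_i = R ⊗_{R^i} R. -/
set_option synthInstance.maxHeartbeats 1000000
set_option maxHeartbeats 1000000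

open MvPolynomial TensorProduct

namespace Stmt11Aux




variable {k : Type} [CommRing k] {n : ℕ}

theorem X_regular {a : Fin n} {p : MvPolynomial (Fin n) k} (h : p * X a = 0) : p = 0 := by
  ext m
  have h2 := congrArg (coeff (m + Finsupp.single a 1)) h
  rw [coeff_mul_X, coeff_zero] at h2
  simp [h2]

theorem X_sub_X_regular {a b : Fin n} (hab : a ≠ b) {p : MvPolynomial (Fin n) k}
    (h : p * (X a - X b) = 0) : p = 0 := by
  classical
  set φ : MvPolynomial (Fin n) k →ₐ[k] MvPolynomial (Fin n) k :=
    aeval (fun s => if s = a then X a + X b else X s) with hφ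
  set ψ : MvPolynomial (Fin n) k →ₐ[k] MvPolynomial (Fin n) k :=
    aeval (fun s => if s = a then X a - X b else X s) with hψ
  have hψφ : ∀ q, ψ (φ q) = q := by
    have hcomp : ψ.comp φ = AlgHom.id k _ := by
      apply MvPolynomial.algHom_ext
      intro s
      by_cases hs : s = a
      · subst hs
        simp [hφ, hψ, aeval_X, hab.symm]
      · simp [hφ, hψ, aeval_X, hs]
    intro q
    calc ψ (φ q) = (ψ.comp φ) q := rfl
      _ = q := by rw [hcomp]; rfl
  have ha : φ (X a - X b) = X a := by
    rw [map_sub]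
    simp [hφ, aeval_X, hab.symm]
  have h2 : φ p * X a = 0 := by
    have h3 := congrArg φ h
    rw [map_mul, map_zero, ha] at h3
    exact h3
  have h4 : φ p = 0 := X_regular h2
  have h5 := congrArg ψ h4
  rwa [hψφ, map_zero] at h5

/-- The subalgebra of invariants under the transposition of variables `a` and `b`. -/
noncomputable def Rs (a b : Fin n) (k : Type) [CommRing k] : Subalgebra k (MvPolynomial (Fin n) k) :=
  AlgHom.equalizer (AlgHom.id k (MvPolynomial (Fin n) k))
    (MvPolynomial.renameEquiv k (Equiv.swap a b)).toAlgHom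

theorem mem_Rs {a b : Fin n} {x : MvPolynomial (Fin n) k} :
    x ∈ Rs a b k ↔ rename (Equiv.swap a b) x = x := by
  constructor
  · intro h; exact h.symm
  · intro h; exact h.symm

theorem X_mem_Rs {a b c : Fin n} (h1 : c ≠ a) (h2 : c ≠ b) : (X c : MvPolynomial (Fin n) k) ∈ Rs a b k := by
  rw [mem_Rs, rename_X, Equiv.swap_apply_of_ne_of_ne h1 h2]

theorem s_mem_Rs {a b : Fin n} : (X a + X b : MvPolynomial (Fin n) k) ∈ Rs a b k := by
  rw [mem_Rs, map_add, rename_X, rename_X, Equiv.swap_apply_left, Equiv.swap_apply_right, add_comm]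

theorem mu_mem_Rs {a b : Fin n} : (X a * X b : MvPolynomial (Fin n) k) ∈ Rs a b k := by
  rw [mem_Rs, map_mul, rename_X, rename_X, Equiv.swap_apply_left, Equiv.swap_apply_right, mul_comm]

theorem exists_decomp (a b : Fin n) (r : MvPolynomial (Fin n) k) :
    ∃ c0 c1, c0 ∈ Rs a b k ∧ c1 ∈ Rs a b k ∧ r = c0 + c1 * X b := by
  induction r using MvPolynomial.induction_on with
  | C t => exact ⟨C t, 0, by rw [mem_Rs, rename_C], zero_mem _, by ring⟩
  | add p q hp hq =>
    obtain ⟨c0, c1, h0, h1, rfl⟩ := hp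
    obtain ⟨d0, d1, g0, g1, rfl⟩ := hq
    exact ⟨c0 + d0, c1 + d1, add_mem h0 g0, add_mem h1 g1, by ring⟩
  | mul_X p m hp =>
    obtain ⟨c0, c1, h0, h1, rfl⟩ := hp
    by_cases hma : m = a
    · subst hma
      exact ⟨c0 * (X m + X b) + c1 * (X m * X b), -c0,
        add_mem (mul_mem h0 s_mem_Rs) (mul_mem h1 mu_mem_Rs), neg_mem h0, by ring⟩
    by_cases hmb : m = b
    · subst hmb
      exact ⟨-(c1 * (X a * X m)), c0 + c1 * (X a + X m),
        neg_mem (mul_mem h1 mu_mem_Rs), add_mem h0 (mul_mem h1 s_mem_Rs), by ring⟩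
    · exact ⟨c0 * X m, c1 * X m, mul_mem h0 (X_mem_Rs hma hmb), mul_mem h1 (X_mem_Rs hma hmb),
        by ring⟩

theorem decomp_unique {a b : Fin n} (hab : a ≠ b) {c0 c1 : MvPolynomial (Fin n) k}
    (h0 : c0 ∈ Rs a b k) (h1 : c1 ∈ Rs a b k) (h : c0 + c1 * X b = 0) : c0 = 0 ∧ c1 = 0 := by
  have h' : c0 + c1 * X a = 0 := by
    have h2 := congrArg (rename (Equiv.swap a b)) h
    rw [map_add, map_mul, rename_X, Equiv.swap_apply_right, mem_Rs.mp h0, mem_Rs.mp h1,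
      map_zero] at h2
    exact h2
  have h3 : c1 * (X b - X a) = 0 := by linear_combination h - h'
  have h4 : c1 = 0 := X_sub_X_regular hab.symm h3
  refine ⟨?_, h4⟩
  rw [h4] at h
  simpa using h


noncomputable def d0 (a b : Fin n) (r : MvPolynomial (Fin n) k) : MvPolynomial (Fin n) k :=
  (exists_decomp a b r).choose

noncomputable def d1 (a b : Fin n) (r : MvPolynomial (Fin n) k) : MvPolynomial (Fin n) k :=
  (exists_decomp a b r).choose_spec.choose

theorem d0_mem (a b : Fin n) (r : MvPolynomial (Fin n) k) : d0 a b r ∈ Rs a b k :=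
  (exists_decomp a b r).choose_spec.choose_spec.1

theorem d1_mem (a b : Fin n) (r : MvPolynomial (Fin n) k) : d1 a b r ∈ Rs a b k :=
  (exists_decomp a b r).choose_spec.choose_spec.2.1

theorem d_eq (a b : Fin n) (r : MvPolynomial (Fin n) k) : r = d0 a b r + d1 a b r * X b :=
  (exists_decomp a b r).choose_spec.choose_spec.2.2

theorem d_char {a b : Fin n} (hab : a ≠ b) {c0 c1 r : MvPolynomial (Fin n) k}
    (h0 : c0 ∈ Rs a b k) (h1 : c1 ∈ Rs a b k) (h : r = c0 + c1 * X b) :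
    d0 a b r = c0 ∧ d1 a b r = c1 := by
  have key : (d0 a b r - c0) + (d1 a b r - c1) * X b = 0 := by
    have := d_eq a b r
    linear_combination h - this
  obtain ⟨e0, e1⟩ := decomp_unique hab (sub_mem (d0_mem a b r) h0) (sub_mem (d1_mem a b r) h1) key
  constructor
  · linear_combination e0
  · linear_combination e1

theorem d_of_mem {a b : Fin n} (hab : a ≠ b) {r : MvPolynomial (Fin n) k} (hr : r ∈ Rs a b k) :
    d0 a b r = r ∧ d1 a b r = 0 :=
  d_char hab hr (zero_mem _) (by ring)

theorem d_add {a b : Fin n} (hab : a ≠ b) (r r' : MvPolynomial (Fin n) k) :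
    d0 a b (r + r') = d0 a b r + d0 a b r' ∧ d1 a b (r + r') = d1 a b r + d1 a b r' := by
  refine d_char hab (add_mem (d0_mem a b r) (d0_mem a b r'))
    (add_mem (d1_mem a b r) (d1_mem a b r')) ?_
  have h1 := d_eq a b r
  have h2 := d_eq a b r'
  linear_combination h1 + h2

theorem d_mul {a b : Fin n} (hab : a ≠ b) (v r : MvPolynomial (Fin n) k) :
    d0 a b (v * r) = d0 a b v * d0 a b r - (X a * X b) * (d1 a b v * d1 a b r) ∧
    d1 a b (v * r) = d0 a b v * d1 a b r + d1 a b v * d0 a b r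
      + (X a + X b) * (d1 a b v * d1 a b r) := by
  refine d_char hab
    (sub_mem (mul_mem (d0_mem a b v) (d0_mem a b r))
      (mul_mem mu_mem_Rs (mul_mem (d1_mem a b v) (d1_mem a b r))))
    (add_mem (add_mem (mul_mem (d0_mem a b v) (d1_mem a b r))
      (mul_mem (d1_mem a b v) (d0_mem a b r)))
      (mul_mem s_mem_Rs (mul_mem (d1_mem a b v) (d1_mem a b r)))) ?_
  have h1 := d_eq a b v
  have h2 := d_eq a b r
  calc v * r = (d0 a b v + d1 a b v * X b) * (d0 a b r + d1 a b r * X b) := by rw [← h1, ← h2]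
    _ = _ := by ring

theorem d_smul {a b : Fin n} (hab : a ≠ b) {u : MvPolynomial (Fin n) k} (hu : u ∈ Rs a b k)
    (r : MvPolynomial (Fin n) k) :
    d0 a b (u * r) = u * d0 a b r ∧ d1 a b (u * r) = u * d1 a b r := by
  refine d_char hab (mul_mem hu (d0_mem a b r)) (mul_mem hu (d1_mem a b r)) ?_
  have h2 := d_eq a b r
  calc u * r = u * (d0 a b r + d1 a b r * X b) := by rw [← h2]
    _ = _ := by ring

theorem d_one {a b : Fin n} (hab : a ≠ b) :
    d0 a b (1 : MvPolynomial (Fin n) k) = 1 ∧ d1 a b (1 : MvPolynomial (Fin n) k) = 0 :=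
  d_of_mem hab (one_mem _)

theorem d_zero {a b : Fin n} (hab : a ≠ b) :
    d0 a b (0 : MvPolynomial (Fin n) k) = 0 ∧ d1 a b (0 : MvPolynomial (Fin n) k) = 0 :=
  d_of_mem hab (zero_mem _)

/- Commuting of the two disjoint swaps -/
theorem swap_comm_pt {a b c d y : Fin n} (hac : a ≠ c) (had : a ≠ d) (hbc : b ≠ c)
    (hbd : b ≠ d) :
    Equiv.swap a b (Equiv.swap c d y) = Equiv.swap c d (Equiv.swap a b y) := by
  by_cases hyc : y = c
  · rw [hyc, Equiv.swap_apply_left, Equiv.swap_apply_of_ne_of_ne had.symm hbd.symm,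
      Equiv.swap_apply_of_ne_of_ne hac.symm hbc.symm, Equiv.swap_apply_left]
  by_cases hyd : y = d
  · rw [hyd, Equiv.swap_apply_right, Equiv.swap_apply_of_ne_of_ne hac.symm hbc.symm,
      Equiv.swap_apply_of_ne_of_ne had.symm hbd.symm, Equiv.swap_apply_right]
  by_cases hya : y = a
  · rw [hya, Equiv.swap_apply_of_ne_of_ne hac had, Equiv.swap_apply_left,
      Equiv.swap_apply_of_ne_of_ne hbc hbd]
  by_cases hyb : y = b
  · rw [hyb, Equiv.swap_apply_of_ne_of_ne hbc hbd, Equiv.swap_apply_right,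
      Equiv.swap_apply_of_ne_of_ne hac had]
  · rw [Equiv.swap_apply_of_ne_of_ne hyc hyd, Equiv.swap_apply_of_ne_of_ne hya hyb,
      Equiv.swap_apply_of_ne_of_ne hyc hyd]

theorem rename_swap_comm {a b c d : Fin n} (hac : a ≠ c) (had : a ≠ d) (hbc : b ≠ c)
    (hbd : b ≠ d) (x : MvPolynomial (Fin n) k) :
    rename (Equiv.swap a b) (rename (Equiv.swap c d) x)
      = rename (Equiv.swap c d) (rename (Equiv.swap a b) x) := by
  have hfun : (⇑(Equiv.swap a b) ∘ ⇑(Equiv.swap c d)) = (⇑(Equiv.swap c d) ∘ ⇑(Equiv.swap a b)) :=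
    funext fun y => swap_comm_pt hac had hbc hbd
  rw [rename_rename, rename_rename, hfun]

theorem rename_mem_Rs {a b c d : Fin n} (hac : a ≠ c) (had : a ≠ d) (hbc : b ≠ c)
    (hbd : b ≠ d) {x : MvPolynomial (Fin n) k} (hx : x ∈ Rs c d k) :
    rename (Equiv.swap a b) x ∈ Rs c d k := by
  rw [mem_Rs] at hx ⊢
  rw [← rename_swap_comm hac had hbc hbd, hx]

theorem d_mem_other {a b c d : Fin n} (hcd : c ≠ d) (hac : a ≠ c) (had : a ≠ d) (hbc : b ≠ c)
    (hbd : b ≠ d) {v : MvPolynomial (Fin n) k} (hv : v ∈ Rs a b k) :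
    d0 c d v ∈ Rs a b k ∧ d1 c d v ∈ Rs a b k := by
  have heq : v = rename (Equiv.swap a b) (d0 c d v)
      + rename (Equiv.swap a b) (d1 c d v) * X d := by
    have h2 := congrArg (rename (Equiv.swap a b)) (d_eq c d v)
    rw [map_add, map_mul, rename_X, Equiv.swap_apply_of_ne_of_ne had.symm hbd.symm,
      mem_Rs.mp hv] at h2
    exact h2
  obtain ⟨e0, e1⟩ := d_char hcd (rename_mem_Rs hac had hbc hbd (d0_mem c d v))
    (rename_mem_Rs hac had hbc hbd (d1_mem c d v)) heq
  constructor
  · rw [mem_Rs]; exact e0.symm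
  · rw [mem_Rs]; exact e1.symm

theorem cross {a b c d : Fin n} {u : MvPolynomial (Fin n) k}
    (hu1 : u ∈ Rs a b k) (hu2 : u ∈ Rs c d k) (x w : MvPolynomial (Fin n) k) :
    (u * x) ⊗ₜ[↥(Rs c d k)] ((1 : MvPolynomial (Fin n) k) ⊗ₜ[↥(Rs a b k)] w)
      = x ⊗ₜ[↥(Rs c d k)] ((1 : MvPolynomial (Fin n) k) ⊗ₜ[↥(Rs a b k)] (u * w)) := by
  have e1 : (⟨u, hu2⟩ : ↥(Rs c d k)) • (1 : MvPolynomial (Fin n) k) = u := by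
    rw [Subalgebra.smul_def, smul_eq_mul, mul_one]
  have e1' : (⟨u, hu1⟩ : ↥(Rs a b k)) • (1 : MvPolynomial (Fin n) k) = u := by
    rw [Subalgebra.smul_def, smul_eq_mul, mul_one]
  have e2 : (⟨u, hu2⟩ : ↥(Rs c d k)) • x = u * x := by
    rw [Subalgebra.smul_def, smul_eq_mul]
  have e3 : (⟨u, hu1⟩ : ↥(Rs a b k)) • w = u * w := by
    rw [Subalgebra.smul_def, smul_eq_mul]
  calc (u * x) ⊗ₜ[↥(Rs c d k)] ((1 : MvPolynomial (Fin n) k) ⊗ₜ[↥(Rs a b k)] w)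
      = ((⟨u, hu2⟩ : ↥(Rs c d k)) • x) ⊗ₜ[↥(Rs c d k)]
          ((1 : MvPolynomial (Fin n) k) ⊗ₜ[↥(Rs a b k)] w) := by rw [e2]
    _ = x ⊗ₜ[↥(Rs c d k)]
          ((⟨u, hu2⟩ : ↥(Rs c d k)) • ((1 : MvPolynomial (Fin n) k) ⊗ₜ[↥(Rs a b k)] w)) :=
        TensorProduct.smul_tmul _ _ _
    _ = x ⊗ₜ[↥(Rs c d k)]
          (((⟨u, hu2⟩ : ↥(Rs c d k)) • (1 : MvPolynomial (Fin n) k)) ⊗ₜ[↥(Rs a b k)] w) := by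
        exact congrArg (TensorProduct.tmul _ x) (TensorProduct.smul_tmul' _ _ _)
    _ = x ⊗ₜ[↥(Rs c d k)]
          (((⟨u, hu1⟩ : ↥(Rs a b k)) • (1 : MvPolynomial (Fin n) k)) ⊗ₜ[↥(Rs a b k)] w) := by
        rw [e1, e1']
    _ = x ⊗ₜ[↥(Rs c d k)]
          ((1 : MvPolynomial (Fin n) k) ⊗ₜ[↥(Rs a b k)] ((⟨u, hu1⟩ : ↥(Rs a b k)) • w)) := by
        rw [TensorProduct.smul_tmul]
    _ = x ⊗ₜ[↥(Rs c d k)] ((1 : MvPolynomial (Fin n) k) ⊗ₜ[↥(Rs a b k)] (u * w)) := by rw [e3]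



theorem midCross {a b c d : Fin n} {u : MvPolynomial (Fin n) k} (hu : u ∈ Rs a b k)
    (x m w : MvPolynomial (Fin n) k) :
    (u * x) ⊗ₜ[↥(Rs a b k)] (m ⊗ₜ[↥(Rs c d k)] w)
      = x ⊗ₜ[↥(Rs a b k)] ((u * m) ⊗ₜ[↥(Rs c d k)] w) := by
  have e2 : (⟨u, hu⟩ : ↥(Rs a b k)) • x = u * x := by rw [Subalgebra.smul_def, smul_eq_mul]
  have e4 : (⟨u, hu⟩ : ↥(Rs a b k)) • m = u * m := by rw [Subalgebra.smul_def, smul_eq_mul]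
  calc (u * x) ⊗ₜ[↥(Rs a b k)] (m ⊗ₜ[↥(Rs c d k)] w)
      = ((⟨u, hu⟩ : ↥(Rs a b k)) • x) ⊗ₜ[↥(Rs a b k)] (m ⊗ₜ[↥(Rs c d k)] w) := by rw [e2]
    _ = x ⊗ₜ[↥(Rs a b k)] ((⟨u, hu⟩ : ↥(Rs a b k)) • (m ⊗ₜ[↥(Rs c d k)] w)) :=
        TensorProduct.smul_tmul _ _ _
    _ = x ⊗ₜ[↥(Rs a b k)] (((⟨u, hu⟩ : ↥(Rs a b k)) • m) ⊗ₜ[↥(Rs c d k)] w) := by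
        exact congrArg (TensorProduct.tmul _ x) (TensorProduct.smul_tmul' _ _ _)
    _ = x ⊗ₜ[↥(Rs a b k)] ((u * m) ⊗ₜ[↥(Rs c d k)] w) := by rw [e4]

theorem innerCross {c d : Fin n} {u : MvPolynomial (Fin n) k} (hu : u ∈ Rs c d k)
    (m w : MvPolynomial (Fin n) k) :
    (u * m) ⊗ₜ[↥(Rs c d k)] w = m ⊗ₜ[↥(Rs c d k)] (u * w) := by
  have e2 : (⟨u, hu⟩ : ↥(Rs c d k)) • m = u * m := by rw [Subalgebra.smul_def, smul_eq_mul]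
  have e4 : (⟨u, hu⟩ : ↥(Rs c d k)) • w = u * w := by rw [Subalgebra.smul_def, smul_eq_mul]
  calc (u * m) ⊗ₜ[↥(Rs c d k)] w = ((⟨u, hu⟩ : ↥(Rs c d k)) • m) ⊗ₜ[↥(Rs c d k)] w := by rw [e2]
    _ = m ⊗ₜ[↥(Rs c d k)] ((⟨u, hu⟩ : ↥(Rs c d k)) • w) := TensorProduct.smul_tmul _ _ _
    _ = m ⊗ₜ[↥(Rs c d k)] (u * w) := by rw [e4]

/-- The value of the exchange map on the pure tensor `x ⊗ y` of the inner factor,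
landing in `R ⊗[R^{cd}] (R ⊗[R^{ab}] R)`. -/
noncomputable def phifun (a b c d : Fin n) (x y : MvPolynomial (Fin n) k) :
    (MvPolynomial (Fin n) k) ⊗[↥(Rs c d k)]
      ((MvPolynomial (Fin n) k) ⊗[↥(Rs a b k)] (MvPolynomial (Fin n) k)) :=
  (1 : MvPolynomial (Fin n) k) ⊗ₜ[↥(Rs c d k)]
      ((1 : MvPolynomial (Fin n) k) ⊗ₜ[↥(Rs a b k)] (d0 c d x * y))
    + (X d) ⊗ₜ[↥(Rs c d k)]
      ((1 : MvPolynomial (Fin n) k) ⊗ₜ[↥(Rs a b k)] (d1 c d x * y))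

theorem key {a b c d : Fin n} (hcd : c ≠ d) (hac : a ≠ c) (had : a ≠ d) (hbc : b ≠ c)
    (hbd : b ≠ d) {v : MvPolynomial (Fin n) k} (hv : v ∈ Rs a b k)
    (x y : MvPolynomial (Fin n) k) :
    phifun a b c d (v * x) y = v • phifun a b c d x y := by
  obtain ⟨hm0, hm1⟩ := d_mem_other hcd hac had hbc hbd hv
  have hXc : (X c : MvPolynomial (Fin n) k) ∈ Rs a b k := X_mem_Rs hac.symm hbc.symm
  have hXd : (X d : MvPolynomial (Fin n) k) ∈ Rs a b k := X_mem_Rs had.symm hbd.symm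
  simp only [phifun]
  set v0 := d0 c d v with hv0
  set v1 := d1 c d v with hv1
  set w0 := d0 c d x * y with hw0
  set w1 := d1 c d x * y with hw1
  have h0 : d0 c d (v * x) * y = v0 * w0 - (X c * X d) * v1 * w1 := by
    rw [(d_mul hcd v x).1, hw0, hw1, hv0, hv1]; ring
  have h1 : d1 c d (v * x) * y = v1 * w0 + (v0 + (X c + X d) * v1) * w1 := by
    rw [(d_mul hcd v x).2, hw0, hw1, hv0, hv1]; ring
  have e0 : v ⊗ₜ[↥(Rs c d k)] ((1 : MvPolynomial (Fin n) k) ⊗ₜ[↥(Rs a b k)] w0)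
      = (1 : MvPolynomial (Fin n) k) ⊗ₜ[↥(Rs c d k)]
          ((1 : MvPolynomial (Fin n) k) ⊗ₜ[↥(Rs a b k)] (v0 * w0))
        + (X d) ⊗ₜ[↥(Rs c d k)]
          ((1 : MvPolynomial (Fin n) k) ⊗ₜ[↥(Rs a b k)] (v1 * w0)) := by
    have hv' : v = v0 * 1 + v1 * X d := by rw [hv0, hv1, mul_one]; exact d_eq c d v
    rw [hv', TensorProduct.add_tmul, cross hm0 (d0_mem c d v) 1 w0,
      cross hm1 (d1_mem c d v) (X d) w0]
  have e1 : (v * X d) ⊗ₜ[↥(Rs c d k)] ((1 : MvPolynomial (Fin n) k) ⊗ₜ[↥(Rs a b k)] w1)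
      = (X d) ⊗ₜ[↥(Rs c d k)]
          ((1 : MvPolynomial (Fin n) k) ⊗ₜ[↥(Rs a b k)] ((v0 + (X c + X d) * v1) * w1))
        - (1 : MvPolynomial (Fin n) k) ⊗ₜ[↥(Rs c d k)]
          ((1 : MvPolynomial (Fin n) k) ⊗ₜ[↥(Rs a b k)] ((X c * X d * v1) * w1)) := by
    have hrw : v * X d = (v0 + (X c + X d) * v1) * X d - (X c * X d * v1) * 1 := by
      conv_lhs => rw [d_eq c d v, ← hv0, ← hv1]
      ring
    rw [hrw, TensorProduct.sub_tmul,
      cross (add_mem hm0 (mul_mem (add_mem hXc hXd) hm1))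
        (add_mem (d0_mem c d v) (mul_mem s_mem_Rs (d1_mem c d v))) (X d) w1,
      cross (mul_mem (mul_mem hXc hXd) hm1) (mul_mem mu_mem_Rs (d1_mem c d v)) 1 w1]
  have hsm : ∀ (m : MvPolynomial (Fin n) k)
      (t : (MvPolynomial (Fin n) k) ⊗[↥(Rs a b k)] (MvPolynomial (Fin n) k)),
      v • (m ⊗ₜ[↥(Rs c d k)] t) = (v * m) ⊗ₜ[↥(Rs c d k)] t := by
    intro m t
    rw [TensorProduct.smul_tmul', smul_eq_mul]
  rw [smul_add, hsm, hsm, mul_one, h0, h1, e0, e1]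
  rw [TensorProduct.tmul_sub, TensorProduct.tmul_sub, TensorProduct.tmul_add,
    TensorProduct.tmul_add]
  abel

variable {a b c d : Fin n}

noncomputable def psi0 (a b c d : Fin n) (hcd : c ≠ d) :
    MvPolynomial (Fin n) k →+ MvPolynomial (Fin n) k →+
      ((MvPolynomial (Fin n) k) ⊗[↥(Rs c d k)]
        ((MvPolynomial (Fin n) k) ⊗[↥(Rs a b k)] (MvPolynomial (Fin n) k))) :=
  AddMonoidHom.mk'
    (fun x => AddMonoidHom.mk' (fun y => phifun a b c d x y) (fun y1 y2 => by
      simp only [phifun, mul_add, TensorProduct.tmul_add]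
      abel))
    (fun x1 x2 => by
      apply AddMonoidHom.ext
      intro y
      simp only [AddMonoidHom.mk'_apply, AddMonoidHom.add_apply]
      simp only [phifun, (d_add hcd x1 x2).1, (d_add hcd x1 x2).2, add_mul,
        TensorProduct.tmul_add]
      abel)

theorem psi0_tmul (hcd : c ≠ d) (x y : MvPolynomial (Fin n) k) :
    psi0 (k := k) a b c d hcd x y = phifun a b c d x y := rfl

theorem psi0_balanced (hcd : c ≠ d) (u : ↥(Rs c d k)) (x y : MvPolynomial (Fin n) k) :
    psi0 (k := k) a b c d hcd (u • x) y = psi0 (k := k) a b c d hcd x (u • y) := by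
  rw [psi0_tmul, psi0_tmul]
  have hux : u • x = (u : MvPolynomial (Fin n) k) * x := by
    rw [Subalgebra.smul_def, smul_eq_mul]
  have huy : u • y = (u : MvPolynomial (Fin n) k) * y := by
    rw [Subalgebra.smul_def, smul_eq_mul]
  rw [hux, huy]
  simp only [phifun, (d_smul hcd u.2 x).1, (d_smul hcd u.2 x).2]
  have r0 : (u : MvPolynomial (Fin n) k) * d0 c d x * y
      = d0 c d x * ((u : MvPolynomial (Fin n) k) * y) := by ring
  have r1 : (u : MvPolynomial (Fin n) k) * d1 c d x * y
      = d1 c d x * ((u : MvPolynomial (Fin n) k) * y) := by ring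
  rw [r0, r1]

/-- The inner exchange map `R ⊗[R^{cd}] R →+ R ⊗[R^{cd}] (R ⊗[R^{ab}] R)`. -/
noncomputable def psi (a b c d : Fin n) (hcd : c ≠ d) :
    ((MvPolynomial (Fin n) k) ⊗[↥(Rs c d k)] (MvPolynomial (Fin n) k)) →+
      ((MvPolynomial (Fin n) k) ⊗[↥(Rs c d k)]
        ((MvPolynomial (Fin n) k) ⊗[↥(Rs a b k)] (MvPolynomial (Fin n) k))) :=
  TensorProduct.liftAddHom (psi0 a b c d hcd) (psi0_balanced hcd)

theorem psi_tmul (hcd : c ≠ d) (x y : MvPolynomial (Fin n) k) :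
    psi a b c d hcd (x ⊗ₜ[↥(Rs c d k)] y) = phifun a b c d x y :=
  TensorProduct.liftAddHom_tmul _ _ _ _


theorem psi_smul (hcd : c ≠ d) (hac : a ≠ c) (had : a ≠ d) (hbc : b ≠ c) (hbd : b ≠ d)
    (v : ↥(Rs a b k)) (t : (MvPolynomial (Fin n) k) ⊗[↥(Rs c d k)] (MvPolynomial (Fin n) k)) :
    psi a b c d hcd (v • t) = (v : MvPolynomial (Fin n) k) • psi a b c d hcd t := by
  induction t using TensorProduct.induction_on with
  | zero => simp
  | tmul x y =>
    have h1 : v • (x ⊗ₜ[↥(Rs c d k)] y) = ((v : MvPolynomial (Fin n) k) * x) ⊗ₜ[↥(Rs c d k)] y := by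
      exact TensorProduct.smul_tmul' _ _ _
    rw [h1, psi_tmul, psi_tmul, key hcd hac had hbc hbd v.2 x y]
  | add t1 t2 h1 h2 =>
    rw [smul_add, map_add, map_add, h1, h2, smul_add]

/-- The scalar-extended exchange map, first factor. -/
noncomputable def Phi0 (a b c d : Fin n) (hcd : c ≠ d) :
    MvPolynomial (Fin n) k →+
      ((MvPolynomial (Fin n) k) ⊗[↥(Rs c d k)] (MvPolynomial (Fin n) k)) →+
      ((MvPolynomial (Fin n) k) ⊗[↥(Rs c d k)]
        ((MvPolynomial (Fin n) k) ⊗[↥(Rs a b k)] (MvPolynomial (Fin n) k))) :=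
  AddMonoidHom.mk'
    (fun r => ((smulAddHom (MvPolynomial (Fin n) k)
        ((MvPolynomial (Fin n) k) ⊗[↥(Rs c d k)]
          ((MvPolynomial (Fin n) k) ⊗[↥(Rs a b k)] (MvPolynomial (Fin n) k)))) r).comp
      (psi a b c d hcd))
    (fun r1 r2 => by
      apply AddMonoidHom.ext
      intro t
      simp only [AddMonoidHom.coe_comp, Function.comp_apply, smulAddHom_apply,
        AddMonoidHom.add_apply]
      rw [add_smul])

theorem Phi0_apply (hcd : c ≠ d) (r : MvPolynomial (Fin n) k)
    (t : (MvPolynomial (Fin n) k) ⊗[↥(Rs c d k)] (MvPolynomial (Fin n) k)) :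
    Phi0 (k := k) a b c d hcd r t = r • psi a b c d hcd t := rfl

theorem Phi0_balanced (hcd : c ≠ d) (hac : a ≠ c) (had : a ≠ d) (hbc : b ≠ c) (hbd : b ≠ d)
    (v : ↥(Rs a b k)) (r : MvPolynomial (Fin n) k)
    (t : (MvPolynomial (Fin n) k) ⊗[↥(Rs c d k)] (MvPolynomial (Fin n) k)) :
    Phi0 (k := k) a b c d hcd (v • r) t = Phi0 (k := k) a b c d hcd r (v • t) := by
  rw [Phi0_apply, Phi0_apply]
  have h1 : v • r = (v : MvPolynomial (Fin n) k) * r := by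
    rw [Subalgebra.smul_def, smul_eq_mul]
  rw [h1, psi_smul hcd hac had hbc hbd, mul_comm, mul_smul]

/-- The exchange map `R ⊗[R^{ab}] (R ⊗[R^{cd}] R) →+ R ⊗[R^{cd}] (R ⊗[R^{ab}] R)`. -/
noncomputable def Phi (a b c d : Fin n) (hcd : c ≠ d) (hac : a ≠ c) (had : a ≠ d)
    (hbc : b ≠ c) (hbd : b ≠ d) :
    ((MvPolynomial (Fin n) k) ⊗[↥(Rs a b k)]
        ((MvPolynomial (Fin n) k) ⊗[↥(Rs c d k)] (MvPolynomial (Fin n) k))) →+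
      ((MvPolynomial (Fin n) k) ⊗[↥(Rs c d k)]
        ((MvPolynomial (Fin n) k) ⊗[↥(Rs a b k)] (MvPolynomial (Fin n) k))) :=
  TensorProduct.liftAddHom (Phi0 a b c d hcd) (Phi0_balanced hcd hac had hbc hbd)

theorem Phi_tmul (hcd : c ≠ d) (hac : a ≠ c) (had : a ≠ d) (hbc : b ≠ c) (hbd : b ≠ d)
    (r x y : MvPolynomial (Fin n) k) :
    Phi a b c d hcd hac had hbc hbd (r ⊗ₜ[↥(Rs a b k)] (x ⊗ₜ[↥(Rs c d k)] y))
      = r • phifun a b c d x y := by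
  calc Phi a b c d hcd hac had hbc hbd (r ⊗ₜ[↥(Rs a b k)] (x ⊗ₜ[↥(Rs c d k)] y))
      = Phi0 (k := k) a b c d hcd r (x ⊗ₜ[↥(Rs c d k)] y) :=
        TensorProduct.liftAddHom_tmul _ _ _ _
    _ = r • psi a b c d hcd (x ⊗ₜ[↥(Rs c d k)] y) := rfl
    _ = r • phifun a b c d x y := by rw [psi_tmul]

theorem Phi_smul (hcd : c ≠ d) (hac : a ≠ c) (had : a ≠ d) (hbc : b ≠ c) (hbd : b ≠ d)
    (r : MvPolynomial (Fin n) k)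
    (z : (MvPolynomial (Fin n) k) ⊗[↥(Rs a b k)]
      ((MvPolynomial (Fin n) k) ⊗[↥(Rs c d k)] (MvPolynomial (Fin n) k))) :
    Phi a b c d hcd hac had hbc hbd (r • z) = r • Phi a b c d hcd hac had hbc hbd z := by
  induction z using TensorProduct.induction_on with
  | zero => simp
  | tmul r' t =>
    have h1 : r • (r' ⊗ₜ[↥(Rs a b k)] t) = (r * r') ⊗ₜ[↥(Rs a b k)] t := by
      rw [TensorProduct.smul_tmul', smul_eq_mul]
    rw [h1]
    clear h1
    induction t using TensorProduct.induction_on with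
    | zero => simp [TensorProduct.tmul_zero]
    | tmul x y => rw [Phi_tmul, Phi_tmul, mul_smul]
    | add t1 t2 g1 g2 =>
      rw [TensorProduct.tmul_add, TensorProduct.tmul_add, map_add, map_add, g1, g2, smul_add]
  | add z1 z2 h1 h2 =>
    rw [smul_add, map_add, map_add, h1, h2, smul_add]



theorem Phi_mul (hcd : c ≠ d) (hac : a ≠ c) (had : a ≠ d) (hbc : b ≠ c) (hbd : b ≠ d)
    (z : (MvPolynomial (Fin n) k) ⊗[↥(Rs a b k)]
      ((MvPolynomial (Fin n) k) ⊗[↥(Rs c d k)] (MvPolynomial (Fin n) k)))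
    (r0 : MvPolynomial (Fin n) k) :
    Phi a b c d hcd hac had hbc hbd
        (z * ((1 : MvPolynomial (Fin n) k) ⊗ₜ[↥(Rs a b k)]
          ((1 : MvPolynomial (Fin n) k) ⊗ₜ[↥(Rs c d k)] r0)))
      = Phi a b c d hcd hac had hbc hbd z * ((1 : MvPolynomial (Fin n) k) ⊗ₜ[↥(Rs c d k)]
          ((1 : MvPolynomial (Fin n) k) ⊗ₜ[↥(Rs a b k)] r0)) := by
  haveI := Distrib.rightDistribClass ((MvPolynomial (Fin n) k) ⊗[↥(Rs a b k)]
    ((MvPolynomial (Fin n) k) ⊗[↥(Rs c d k)] (MvPolynomial (Fin n) k)))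
  haveI := Distrib.rightDistribClass ((MvPolynomial (Fin n) k) ⊗[↥(Rs c d k)]
    ((MvPolynomial (Fin n) k) ⊗[↥(Rs a b k)] (MvPolynomial (Fin n) k)))
  induction z using TensorProduct.induction_on with
  | zero =>
    rw [map_zero]
    exact (congrArg (Phi (k := k) a b c d hcd hac had hbc hbd) (zero_mul _)).trans ((map_zero _).trans
      (zero_mul ((1 : MvPolynomial (Fin n) k) ⊗ₜ[↥(Rs c d k)]
        ((1 : MvPolynomial (Fin n) k) ⊗ₜ[↥(Rs a b k)] r0))).symm)
  | add z1 z2 h1 h2 => rw [add_mul, map_add, h1, h2, map_add, add_mul]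
  | tmul r t =>
    induction t using TensorProduct.induction_on with
    | zero =>
      simp [TensorProduct.tmul_zero]
      exact (congrArg (Phi (k := k) a b c d hcd hac had hbc hbd) (zero_mul _)).trans ((map_zero _).trans
        (zero_mul ((1 : MvPolynomial (Fin n) k) ⊗ₜ[↥(Rs c d k)]
          ((1 : MvPolynomial (Fin n) k) ⊗ₜ[↥(Rs a b k)] r0))).symm)
    | add t1 t2 g1 g2 =>
      rw [TensorProduct.tmul_add, add_mul, map_add, g1, g2, map_add, add_mul]
    | tmul x y =>
      have hL : (r ⊗ₜ[↥(Rs a b k)] (x ⊗ₜ[↥(Rs c d k)] y))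
            * ((1 : MvPolynomial (Fin n) k) ⊗ₜ[↥(Rs a b k)]
              ((1 : MvPolynomial (Fin n) k) ⊗ₜ[↥(Rs c d k)] r0))
          = r ⊗ₜ[↥(Rs a b k)] (x ⊗ₜ[↥(Rs c d k)] (y * r0)) := by
        rw [Algebra.TensorProduct.tmul_mul_tmul, Algebra.TensorProduct.tmul_mul_tmul,
          mul_one, mul_one]
      rw [hL, Phi_tmul, Phi_tmul, smul_mul_assoc]
      congr 1
      simp only [phifun, add_mul, Algebra.TensorProduct.tmul_mul_tmul, mul_one, one_mul,
        mul_assoc]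

theorem Phi_Phi (hab : a ≠ b) (hcd : c ≠ d) (hac : a ≠ c) (had : a ≠ d) (hbc : b ≠ c)
    (hbd : b ≠ d)
    (z : (MvPolynomial (Fin n) k) ⊗[↥(Rs a b k)]
      ((MvPolynomial (Fin n) k) ⊗[↥(Rs c d k)] (MvPolynomial (Fin n) k))) :
    Phi c d a b hab hac.symm hbc.symm had.symm hbd.symm
      (Phi a b c d hcd hac had hbc hbd z) = z := by
  have hXd : (X d : MvPolynomial (Fin n) k) ∈ Rs a b k := X_mem_Rs had.symm hbd.symm
  induction z using TensorProduct.induction_on with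
  | zero => simp
  | add z1 z2 h1 h2 => rw [map_add, map_add, h1, h2]
  | tmul r t =>
    induction t using TensorProduct.induction_on with
    | zero => simp [TensorProduct.tmul_zero]
    | add t1 t2 g1 g2 =>
      rw [TensorProduct.tmul_add, map_add, map_add, g1, g2, ← TensorProduct.tmul_add]
    | tmul x y =>
      rw [Phi_tmul, Phi_smul hab hac.symm hbc.symm had.symm hbd.symm]
      have hone : ∀ w : MvPolynomial (Fin n) k, phifun c d a b 1 w
          = (1 : MvPolynomial (Fin n) k) ⊗ₜ[↥(Rs a b k)]
            ((1 : MvPolynomial (Fin n) k) ⊗ₜ[↥(Rs c d k)] w) := by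
        intro w
        simp only [phifun, (d_one hab).1, (d_one hab).2, one_mul, zero_mul,
          TensorProduct.tmul_zero, add_zero]
      have hphi : Phi c d a b hab hac.symm hbc.symm had.symm hbd.symm
          (phifun a b c d x y)
          = (1 : MvPolynomial (Fin n) k) ⊗ₜ[↥(Rs a b k)] (x ⊗ₜ[↥(Rs c d k)] y) := by
        simp only [phifun]
        rw [map_add, Phi_tmul, Phi_tmul, hone, hone, one_smul]
        have h2 : (X d : MvPolynomial (Fin n) k) •
              ((1 : MvPolynomial (Fin n) k) ⊗ₜ[↥(Rs a b k)]
                ((1 : MvPolynomial (Fin n) k) ⊗ₜ[↥(Rs c d k)] (d1 c d x * y)))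
            = (1 : MvPolynomial (Fin n) k) ⊗ₜ[↥(Rs a b k)]
                ((d1 c d x * X d) ⊗ₜ[↥(Rs c d k)] y) := by
          rw [TensorProduct.smul_tmul', smul_eq_mul, mul_one]
          calc (X d : MvPolynomial (Fin n) k) ⊗ₜ[↥(Rs a b k)]
                ((1 : MvPolynomial (Fin n) k) ⊗ₜ[↥(Rs c d k)] (d1 c d x * y))
              = ((X d : MvPolynomial (Fin n) k) * 1) ⊗ₜ[↥(Rs a b k)]
                ((1 : MvPolynomial (Fin n) k) ⊗ₜ[↥(Rs c d k)] (d1 c d x * y)) := by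
                rw [mul_one]
            _ = (1 : MvPolynomial (Fin n) k) ⊗ₜ[↥(Rs a b k)]
                (((X d : MvPolynomial (Fin n) k) * 1) ⊗ₜ[↥(Rs c d k)] (d1 c d x * y)) :=
                midCross hXd 1 1 (d1 c d x * y)
            _ = (1 : MvPolynomial (Fin n) k) ⊗ₜ[↥(Rs a b k)]
                ((X d : MvPolynomial (Fin n) k) ⊗ₜ[↥(Rs c d k)] (d1 c d x * y)) := by
                rw [mul_one]
            _ = (1 : MvPolynomial (Fin n) k) ⊗ₜ[↥(Rs a b k)]
                ((d1 c d x * X d) ⊗ₜ[↥(Rs c d k)] y) := by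
                rw [innerCross (d1_mem c d x) (X d) y]
        have h3 : (1 : MvPolynomial (Fin n) k) ⊗ₜ[↥(Rs a b k)]
              ((1 : MvPolynomial (Fin n) k) ⊗ₜ[↥(Rs c d k)] (d0 c d x * y))
            = (1 : MvPolynomial (Fin n) k) ⊗ₜ[↥(Rs a b k)]
              ((d0 c d x) ⊗ₜ[↥(Rs c d k)] y) := by
          have h4 := innerCross (k := k) (d0_mem c d x) (1 : MvPolynomial (Fin n) k) y
          rw [mul_one] at h4
          rw [← h4]
        rw [h2, h3, ← TensorProduct.tmul_add, ← TensorProduct.add_tmul, ← d_eq c d x]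
      rw [hphi, TensorProduct.smul_tmul', smul_eq_mul, mul_one]



/-- The exchange map as a left `R`-linear map. -/
noncomputable def PhiLin (a b c d : Fin n) (hcd : c ≠ d) (hac : a ≠ c) (had : a ≠ d)
    (hbc : b ≠ c) (hbd : b ≠ d) :
    ((MvPolynomial (Fin n) k) ⊗[↥(Rs a b k)]
        ((MvPolynomial (Fin n) k) ⊗[↥(Rs c d k)] (MvPolynomial (Fin n) k)))
      →ₗ[MvPolynomial (Fin n) k]
      ((MvPolynomial (Fin n) k) ⊗[↥(Rs c d k)]
        ((MvPolynomial (Fin n) k) ⊗[↥(Rs a b k)] (MvPolynomial (Fin n) k))) where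
  toFun := Phi a b c d hcd hac had hbc hbd
  map_add' := fun z1 z2 => map_add _ z1 z2
  map_smul' := fun r z => Phi_smul hcd hac had hbc hbd r z

/-- The exchange `R`-linear equivalence. -/
noncomputable def PhiEquiv (a b c d : Fin n) (hab : a ≠ b) (hcd : c ≠ d) (hac : a ≠ c)
    (had : a ≠ d) (hbc : b ≠ c) (hbd : b ≠ d) :
    ((MvPolynomial (Fin n) k) ⊗[↥(Rs a b k)]
        ((MvPolynomial (Fin n) k) ⊗[↥(Rs c d k)] (MvPolynomial (Fin n) k)))
      ≃ₗ[MvPolynomial (Fin n) k]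
      ((MvPolynomial (Fin n) k) ⊗[↥(Rs c d k)]
        ((MvPolynomial (Fin n) k) ⊗[↥(Rs a b k)] (MvPolynomial (Fin n) k))) :=
  LinearEquiv.ofLinear (PhiLin a b c d hcd hac had hbc hbd)
    (PhiLin c d a b hab hac.symm hbc.symm had.symm hbd.symm)
    (by
      apply LinearMap.ext
      intro z
      exact Phi_Phi hcd hab hac.symm hbc.symm had.symm hbd.symm z)
    (by
      apply LinearMap.ext
      intro z
      exact Phi_Phi hab hcd hac had hbc hbd z)

theorem PhiEquiv_apply (hab : a ≠ b) (hcd : c ≠ d) (hac : a ≠ c) (had : a ≠ d) (hbc : b ≠ c)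
    (hbd : b ≠ d)
    (z : (MvPolynomial (Fin n) k) ⊗[↥(Rs a b k)]
      ((MvPolynomial (Fin n) k) ⊗[↥(Rs c d k)] (MvPolynomial (Fin n) k))) :
    PhiEquiv a b c d hab hcd hac had hbc hbd z = Phi a b c d hcd hac had hbc hbd z := rfl

end Stmt11Aux

open Stmt11Aux in
/-- Let `R = k[x_1, ..., x_n]` and let `i, j` be distant indices (`|i − j| ≥ 2`).  Then
`B_i ⊗_R B_j ≅ B_j ⊗_R B_i` as `R`-bimodules, where `B_i = R ⊗_{R^i} R` and `R^i` is the
subring of invariants under the transposition `(i, i+1)`.  Identifying `B_i ⊗_R B_j` with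
`R ⊗_{R^i} R ⊗_{R^j} R`, the isomorphism is left `R`-linear and commutes with right
multiplication by elements of `R`. -/
theorem stmt_11 (k : Type) [CommRing k] (n : ℕ) (i j : Fin n)
    (hi : (i : ℕ) + 1 < n) (hj : (j : ℕ) + 1 < n)
    (hdist : (i : ℕ) + 2 ≤ (j : ℕ) ∨ (j : ℕ) + 2 ≤ (i : ℕ)) :
    let R := MvPolynomial (Fin n) k
    let σi : R ≃ₐ[k] R := MvPolynomial.renameEquiv k (Equiv.swap i ⟨(i : ℕ) + 1, hi⟩)
    let σj : R ≃ₐ[k] R := MvPolynomial.renameEquiv k (Equiv.swap j ⟨(j : ℕ) + 1, hj⟩)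
    let Ri : Subalgebra k R := AlgHom.equalizer (AlgHom.id k R) σi.toAlgHom
    let Rj : Subalgebra k R := AlgHom.equalizer (AlgHom.id k R) σj.toAlgHom
    let Tij := R ⊗[↥Ri] (R ⊗[↥Rj] R)
    let Tji := R ⊗[↥Rj] (R ⊗[↥Ri] R)
    ∃ e : Tij ≃ₗ[R] Tji,
      ∀ (x : Tij) (r : R),
        e (x * ((1 : R) ⊗ₜ[↥Ri] ((1 : R) ⊗ₜ[↥Rj] r))) =
          e x * ((1 : R) ⊗ₜ[↥Rj] ((1 : R) ⊗ₜ[↥Ri] r)) := by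
  intro R σi σj Ri Rj Tij Tji
  have hv : ∀ {p q : Fin n}, (p : ℕ) ≠ (q : ℕ) → p ≠ q :=
    fun hpq h => hpq (congrArg Fin.val h)
  have hab : i ≠ (⟨(i : ℕ) + 1, hi⟩ : Fin n) := hv (show (i : ℕ) ≠ (i : ℕ) + 1 by omega)
  have hcd : j ≠ (⟨(j : ℕ) + 1, hj⟩ : Fin n) := hv (show (j : ℕ) ≠ (j : ℕ) + 1 by omega)
  have hac : i ≠ j := hv (show (i : ℕ) ≠ (j : ℕ) by omega)
  have had : i ≠ (⟨(j : ℕ) + 1, hj⟩ : Fin n) := hv (show (i : ℕ) ≠ (j : ℕ) + 1 by omega)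
  have hbc : (⟨(i : ℕ) + 1, hi⟩ : Fin n) ≠ j := hv (show (i : ℕ) + 1 ≠ (j : ℕ) by omega)
  have hbd : (⟨(i : ℕ) + 1, hi⟩ : Fin n) ≠ (⟨(j : ℕ) + 1, hj⟩ : Fin n) :=
    hv (show (i : ℕ) + 1 ≠ (j : ℕ) + 1 by omega)
  exact ⟨PhiEquiv i ⟨(i : ℕ) + 1, hi⟩ j ⟨(j : ℕ) + 1, hj⟩ hab hcd hac had hbc hbd,
    fun x r => Phi_mul hcd hac had hbc hbd x r⟩
end
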